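/- arXiv:1608.05666 — 14 statements merged into one kernel-verified Lean document; each statement's English description precedes it below -/
import Mathlib

section
/- The effective weight of a numerical semigroup S, defined as the number of pairs (a,b) with 0 < a < b where a is a generator of S and b is a gap of S, satisfies ew(S) ≤ wt(S), where wt(S) is the number of pairs (a,b) with 0 < a < b, a ∈ S, and b ∉ S. Moreover, ew(S) = wt(S) if and only if S is primitive (i.e., the sum of any two positive elements of S exceeds the largest gap of S). -/
/-- A numerical semigroup: a cofinite subset of ℕ containing 0 and closed under addition. -/
def IsNumericalSemigroup (S : Set ℕ) : Prop :=
  0 ∈ S ∧ {n : ℕ | n ∉ S}.Finite ∧ ∀ a ∈ S, ∀ b ∈ S, a + b ∈ S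

/-- The genus: number of gaps. -/
noncomputable def genus (S : Set ℕ) : ℕ := {n : ℕ | n ∉ S}.ncard

/-- A generator: a positive element of S not expressible as a sum of two positive elements of S. -/
def IsGenerator (S : Set ℕ) (a : ℕ) : Prop :=
  a ∈ S ∧ 0 < a ∧ ¬ ∃ x ∈ S, ∃ y ∈ S, 0 < x ∧ 0 < y ∧ x + y = a

/-- Effective weight: number of pairs (a,b), 0 < a < b, a a generator, b a gap. -/
noncomputable def ew (S : Set ℕ) : ℕ :=
  {p : ℕ × ℕ | p.1 < p.2 ∧ IsGenerator S p.1 ∧ p.2 ∉ S}.ncard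

/-- Weight: number of pairs (a,b), 0 < a < b, a ∈ S, b a gap. -/
noncomputable def wt (S : Set ℕ) : ℕ :=
  {p : ℕ × ℕ | 0 < p.1 ∧ p.1 < p.2 ∧ p.1 ∈ S ∧ p.2 ∉ S}.ncard

/-- Primitivity: every gap is less than the sum of any two positive elements of S. -/
def IsPrimitive (S : Set ℕ) : Prop :=
  ∀ b ∉ S, ∀ x ∈ S, 0 < x → ∀ y ∈ S, 0 < y → b < x + y

/-- Secundive: the largest gap is smaller than the sum of the two smallest generators. -/
def Secundive (S : Set ℕ) : Prop :=
  ∀ f m n : ℕ, f ∉ S →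
    IsGenerator S m → (∀ a, IsGenerator S a → m ≤ a) →
    IsGenerator S n → n ≠ m → (∀ a, IsGenerator S a → a ≠ m → n ≤ a) →
    f < m + n

/-- λ(S): number of gaps b such that b + a ∈ S for every positive a ∈ S. -/
noncomputable def lambdaS (S : Set ℕ) : ℕ :=
  {b : ℕ | b ∉ S ∧ ∀ a ∈ S, 0 < a → b + a ∈ S}.ncard

/-- The slide operation. -/
def slide (k s : ℕ) : ℕ :=
  if k ∣ s then s else if s % k = 1 then s - 2 else s - 1

theorem stmt0 (S : Set ℕ) (hS : IsNumericalSemigroup S) :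
    ew S ≤ wt S ∧ (ew S = wt S ↔ IsPrimitive S) := by
  obtain ⟨h0, hfin, hadd⟩ := hS
  obtain ⟨N, hN⟩ := hfin.bddAbove
  have hWfin : {p : ℕ × ℕ | 0 < p.1 ∧ p.1 < p.2 ∧ p.1 ∈ S ∧ p.2 ∉ S}.Finite := by
    apply Set.Finite.subset ((Set.finite_Iio (N + 1)).prod hfin)
    rintro ⟨a, b⟩ ⟨-, hab, -, hb⟩
    refine ⟨?_, hb⟩
    have := hN hb
    simp only [Set.mem_Iio]
    omega
  have hsub : {p : ℕ × ℕ | p.1 < p.2 ∧ IsGenerator S p.1 ∧ p.2 ∉ S} ⊆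
      {p : ℕ × ℕ | 0 < p.1 ∧ p.1 < p.2 ∧ p.1 ∈ S ∧ p.2 ∉ S} := by
    rintro ⟨a, b⟩ ⟨hab, ⟨haS, hapos, -⟩, hb⟩
    exact ⟨hapos, hab, haS, hb⟩
  have hle : ew S ≤ wt S := Set.ncard_le_ncard hsub hWfin
  refine ⟨hle, ?_, ?_⟩
  · intro heq
    have hEfin := hWfin.subset hsub
    have hsets := Set.eq_of_subset_of_ncard_le hsub (le_of_eq heq.symm) hWfin
    intro b hb x hx hxpos y hy hypos
    by_contra hcon
    push_neg at hcon
    have haS : x + y ∈ S := hadd x hx y hy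
    have hlt : x + y < b := lt_of_le_of_ne hcon (fun h => hb (h ▸ haS))
    have hmem : (⟨x + y, b⟩ : ℕ × ℕ) ∈
        {p : ℕ × ℕ | 0 < p.1 ∧ p.1 < p.2 ∧ p.1 ∈ S ∧ p.2 ∉ S} :=
      ⟨by omega, hlt, haS, hb⟩
    rw [← hsets] at hmem
    exact hmem.2.1.2.2 ⟨x, hx, y, hy, hxpos, hypos, rfl⟩
  · intro hprim
    have hsub2 : {p : ℕ × ℕ | 0 < p.1 ∧ p.1 < p.2 ∧ p.1 ∈ S ∧ p.2 ∉ S} ⊆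
        {p : ℕ × ℕ | p.1 < p.2 ∧ IsGenerator S p.1 ∧ p.2 ∉ S} := by
      rintro ⟨a, b⟩ ⟨hapos, hab, haS, hb⟩
      refine ⟨hab, ⟨haS, hapos, ?_⟩, hb⟩
      rintro ⟨x, hx, y, hy, hxpos, hypos, hxy⟩
      have := hprim b hb x hx hxpos y hy hypos
      omega
    rw [ew, wt, Set.Subset.antisymm hsub hsub2]
end

section
/- Let e, d be relatively prime integers with 1 < e < d, let S = ⟨e,d⟩, and let g = (e−1)(d−1)/2 be its genus. Then the effective weight of S equals 2g − d − e + ⌊d/e⌋ + 2. -/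
set_option linter.unusedSectionVars false
open Finset

namespace EwAux

/-- The numerical semigroup generated by e and d, as a set. -/
def SS (e d : ℕ) : Set ℕ := {n : ℕ | ∃ x y : ℕ, n = x * e + y * d}

/-- canonical coefficient of d mod e -/
noncomputable def yv (e d n : ℕ) : ℕ := ((n : ZMod e) * (d : ZMod e)⁻¹).val

variable {e d : ℕ} (he : 1 < e) (hed : e < d) (hcop : Nat.Coprime e d)

include he in
lemma neZero : NeZero e := ⟨by omega⟩

lemma pred_mul_add {a b : ℕ} (h : 0 < a) : (a - 1) * b + b = a * b := by
  cases a with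
  | zero => omega
  | succ m => simp [Nat.succ_sub_one, Nat.succ_mul]

include he hcop in
lemma cast_yv_mul (n : ℕ) : ((yv e d n * d : ℕ) : ZMod e) = (n : ZMod e) := by
  haveI : NeZero e := neZero he
  have hu : IsUnit (d : ZMod e) := (ZMod.isUnit_iff_coprime d e).mpr hcop.symm
  push_cast [yv, ZMod.natCast_val, ZMod.cast_id]
  rw [mul_assoc, ZMod.inv_mul_of_unit _ hu, mul_one]

include he in
lemma yv_lt (n : ℕ) : yv e d n < e := by
  haveI : NeZero e := neZero he
  exact ZMod.val_lt _

include he hcop in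
lemma yv_unique {n y : ℕ} (hy : y < e) (h : ((y * d : ℕ) : ZMod e) = (n : ZMod e)) :
    y = yv e d n := by
  haveI : NeZero e := neZero he
  have hu : IsUnit (d : ZMod e) := (ZMod.isUnit_iff_coprime d e).mpr hcop.symm
  have : (y : ZMod e) = (n : ZMod e) * (d : ZMod e)⁻¹ := by
    push_cast at h
    rw [← h, mul_assoc, ZMod.mul_inv_of_unit _ hu, mul_one]
  rw [yv, ← this, ZMod.val_cast_of_lt hy]

include he hcop in
lemma mem_iff (n : ℕ) : n ∈ SS e d ↔ yv e d n * d ≤ n := by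
  constructor
  · rintro ⟨x, y, rfl⟩
    have hy' : y % e < e := Nat.mod_lt _ (by omega)
    have hcast : (((y % e) * d : ℕ) : ZMod e) = ((x * e + y * d : ℕ) : ZMod e) := by
      push_cast [ZMod.natCast_mod]
      rw [ZMod.natCast_self]
      ring
    rw [← yv_unique he hcop hy' hcast]
    calc (y % e) * d ≤ y * d := Nat.mul_le_mul_right _ (Nat.mod_le _ _)
      _ ≤ x * e + y * d := Nat.le_add_left _ _
  · intro hle
    have hmod : yv e d n * d ≡ n [MOD e] :=
      (ZMod.natCast_eq_natCast_iff _ _ _).mp (cast_yv_mul he hcop n)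
    obtain ⟨k, hk⟩ := (Nat.modEq_iff_dvd' hle).mp hmod
    refine ⟨k, yv e d n, ?_⟩
    rw [Nat.mul_comm k e]
    omega

include he hcop in
lemma gap_le {n : ℕ} (hn : n ∉ SS e d) : n + e ≤ yv e d n * d := by
  have hlt : n < yv e d n * d := by
    by_contra h
    exact hn ((mem_iff he hcop n).mpr (by omega))
  have hmod : n ≡ yv e d n * d [MOD e] :=
    ((ZMod.natCast_eq_natCast_iff _ _ _).mp (cast_yv_mul he hcop n)).symm
  obtain ⟨k, hk⟩ := (Nat.modEq_iff_dvd' hlt.le).mp hmod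
  have hk1 : 1 ≤ k := by
    rcases Nat.eq_zero_or_pos k with rfl | h1
    · rw [Nat.mul_zero] at hk; omega
    · exact h1
  have hek : e ≤ e * k := by
    calc e = e * 1 := (Nat.mul_one e).symm
    _ ≤ e * k := Nat.mul_le_mul_left e hk1
  omega

include he hed hcop in
lemma gap_bound {n : ℕ} (hn : n ∉ SS e d) : n + e + d ≤ e * d := by
  have h1 := gap_le he hcop hn
  have h2 : yv e d n ≤ e - 1 := by have := yv_lt he (d := d) n; omega
  have h3 : yv e d n * d ≤ (e - 1) * d := Nat.mul_le_mul_right _ h2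
  have h4 : (e - 1) * d + d = e * d := pred_mul_add (by omega)
  omega

include he hed hcop in
lemma yv_sub {n : ℕ} (hn : n ≤ e * d - e - d) :
    yv e d (e * d - e - d - n) = e - 1 - yv e d n := by
  have hy := yv_lt he (d := d) n
  have hed2 : e + d ≤ e * d := by nlinarith
  symm
  apply yv_unique he hcop (by omega)
  have hA : ((yv e d n * d : ℕ) : ZMod e) = (n : ZMod e) := cast_yv_mul he hcop n
  push_cast [Nat.cast_sub (show yv e d n ≤ e - 1 by omega),
    Nat.cast_sub (show 1 ≤ e by omega), Nat.cast_sub hn,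
    Nat.cast_sub (show d ≤ e * d - e by omega),
    Nat.cast_sub (show e ≤ e * d by exact Nat.le_mul_of_pos_right _ (by omega))] at hA ⊢
  have hE : (e : ZMod e) = 0 := ZMod.natCast_self e
  linear_combination hE - hA

include he hed hcop in
lemma sym {n : ℕ} (hn : n ≤ e * d - e - d) :
    n ∈ SS e d ↔ (e * d - e - d - n) ∉ SS e d := by
  have hy := yv_lt he (d := d) n
  have hs := yv_sub he hed hcop hn
  obtain ⟨z, hz⟩ : ∃ z, e - 1 - yv e d n = z := ⟨_, rfl⟩
  rw [hz] at hs
  have hsplit : z * d + yv e d n * d = (e - 1) * d := by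
    rw [← Nat.add_mul]; congr 1; omega
  have h4 : (e - 1) * d + d = e * d := pred_mul_add (by omega)
  have hed2 : e + d ≤ e * d := by nlinarith
  rw [mem_iff he hcop n, mem_iff he hcop (e * d - e - d - n), hs]
  constructor
  · intro hmem hle
    omega
  · intro h
    by_contra hlt
    have hg : n ∉ SS e d := by
      rw [mem_iff he hcop]; omega
    have := gap_le he hcop hg
    exact h (by omega)

include hed in
lemma mem_zero : 0 ∈ SS e d := ⟨0, 0, by ring⟩

lemma mem_e : e ∈ SS e d := ⟨1, 0, by ring⟩

lemma mem_d : d ∈ SS e d := ⟨0, 1, by ring⟩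

include he hed in
lemma pos_mem_ge {n : ℕ} (hn : n ∈ SS e d) (hpos : 0 < n) : e ≤ n := by
  obtain ⟨x, y, rfl⟩ := hn
  rcases Nat.eq_zero_or_pos x with rfl | hx
  · rcases Nat.eq_zero_or_pos y with rfl | hy
    · simp at hpos
    · have : d ≤ y * d := Nat.le_mul_of_pos_left _ hy
      simp only [Nat.zero_mul, Nat.zero_add]
      omega
  · have : e ≤ x * e := Nat.le_mul_of_pos_left _ hx
    omega

include he hed in
lemma small_gap {n : ℕ} (h0 : 0 < n) (hlt : n < e) : n ∉ SS e d :=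
  fun hm => absurd (pos_mem_ge he hed hm h0) (by omega)

include he hed in
lemma lt_d_mem_iff {n : ℕ} (hn : n < d) : n ∈ SS e d ↔ e ∣ n := by
  constructor
  · rintro ⟨x, y, rfl⟩
    rcases Nat.eq_zero_or_pos y with rfl | hy
    · exact ⟨x, by ring⟩
    · have : d ≤ y * d := Nat.le_mul_of_pos_left _ hy
      omega
  · rintro ⟨k, rfl⟩
    exact ⟨k, 0, by ring⟩

include he hcop in
lemma e_not_dvd_d : ¬ e ∣ d := fun h => by
  have h1 : e = 1 := Nat.Coprime.eq_one_of_dvd hcop h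
  omega

include he hed in
lemma gen_e : IsGenerator (SS e d) e := by
  refine ⟨mem_e, by omega, ?_⟩
  rintro ⟨x, hx, y, hy, hxp, hyp, hsum⟩
  have := pos_mem_ge he hed hx hxp
  have := pos_mem_ge he hed hy hyp
  omega

include he hed hcop in
lemma gen_d : IsGenerator (SS e d) d := by
  refine ⟨mem_d, by omega, ?_⟩
  rintro ⟨x, hx, y, hy, hxp, hyp, hsum⟩
  have hxd : e ∣ x := (lt_d_mem_iff he hed (by omega)).mp hx
  have hyd : e ∣ y := (lt_d_mem_iff he hed (by omega)).mp hy
  have hdvd : e ∣ d := hsum ▸ Nat.dvd_add hxd hyd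
  exact e_not_dvd_d he hcop hdvd

include he hed hcop in
lemma gen_iff (a : ℕ) : IsGenerator (SS e d) a ↔ a = e ∨ a = d := by
  constructor
  · rintro ⟨⟨x, y, rfl⟩, hpos, hnot⟩
    rcases Nat.eq_zero_or_pos x with rfl | hx
    · rcases Nat.eq_zero_or_pos y with rfl | hy
      · omega
      · rcases Nat.lt_or_ge y 2 with hy2 | hy2
        · right; have hy1 : y = 1 := by omega
          subst hy1; omega
        · exfalso
          have hdd : (y - 1) * d + d = y * d := pred_mul_add (by omega)
          have hd1 : d ≤ (y - 1) * d := Nat.le_mul_of_pos_left _ (by omega)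
          exact hnot ⟨d, mem_d, (y - 1) * d, ⟨0, y - 1, by ring⟩, by omega, by omega,
            by omega⟩
    · rcases Nat.eq_zero_or_pos y with rfl | hy
      · rcases Nat.lt_or_ge x 2 with hx2 | hx2
        · left; have hx1 : x = 1 := by omega
          subst hx1; omega
        · exfalso
          have hee : (x - 1) * e + e = x * e := pred_mul_add (by omega)
          have he1 : e ≤ (x - 1) * e := Nat.le_mul_of_pos_left _ (by omega)
          exact hnot ⟨e, mem_e, (x - 1) * e, ⟨x - 1, 0, by ring⟩, by omega, by omega,
            by omega⟩
      · exfalso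
        have hee : (x - 1) * e + e = x * e := pred_mul_add (by omega)
        have hd1 : d ≤ y * d := Nat.le_mul_of_pos_left _ hy
        refine hnot ⟨e, mem_e, (x - 1) * e + y * d, ⟨x - 1, y, by ring⟩, by omega,
          by omega, by omega⟩
  · rintro (rfl | rfl)
    · exact gen_e he hed
    · exact gen_d he hed hcop

open scoped Classical in
/-- the finite set of gaps -/
noncomputable def gapF (e d : ℕ) : Finset ℕ :=
  (Finset.range (e * d)).filter (fun n => n ∉ SS e d)

include he hed hcop in
lemma mem_gapF {n : ℕ} : n ∈ gapF e d ↔ n ∉ SS e d := by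
  classical
  simp only [gapF, Finset.mem_filter, Finset.mem_range, Finset.filter_congr_decidable]
  constructor
  · exact fun h => h.2
  · intro h
    have := gap_bound he hed hcop h
    exact ⟨by omega, h⟩

include he hed hcop in
lemma count_genus : 2 * (gapF e d).card = (e - 1) * (d - 1) := by
  classical
  have hed2 : e + d ≤ e * d := by nlinarith
  set F := e * d - e - d with hF
  have h1 : gapF e d = (Finset.range (F + 1)).filter (fun n => n ∉ SS e d) := by
    ext n
    simp only [gapF, Finset.mem_filter, Finset.mem_range, Finset.filter_congr_decidable]
    constructor
    · rintro ⟨h, hg⟩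
      have := gap_bound he hed hcop hg
      exact ⟨by omega, hg⟩
    · rintro ⟨h, hg⟩
      exact ⟨by omega, hg⟩
  have h2 : ((Finset.range (F + 1)).filter (fun n => n ∉ SS e d)).card
      = ((Finset.range (F + 1)).filter (fun n => n ∈ SS e d)).card := by
    apply Finset.card_bij' (i := fun n _ => F - n) (j := fun n _ => F - n)
    · intro a ha
      simp only [Finset.mem_filter, Finset.mem_range] at ha ⊢
      refine ⟨by omega, ?_⟩
      have hle : F - a ≤ F := by omega
      have := (sym he hed hcop (n := F - a) (by omega))
      rw [Nat.sub_sub_self (by omega : a ≤ F)] at this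
      exact this.mpr ha.2
    · intro a ha
      simp only [Finset.mem_filter, Finset.mem_range] at ha ⊢
      refine ⟨by omega, ?_⟩
      exact (sym he hed hcop (n := a) (by omega)).mp ha.2
    · intro a ha
      simp only [Finset.mem_filter, Finset.mem_range] at ha
      omega
    · intro a ha
      simp only [Finset.mem_filter, Finset.mem_range] at ha
      omega
  have h3 : ((Finset.range (F + 1)).filter (fun n => n ∉ SS e d)).card
      + ((Finset.range (F + 1)).filter (fun n => n ∈ SS e d)).card = F + 1 := by
    have := Finset.card_filter_add_card_filter_not
      (s := Finset.range (F + 1)) (p := fun n => n ∉ SS e d)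
    simp only [not_not, Finset.filter_congr_decidable] at this
    rw [this, Finset.card_range]
  have h4 : (e - 1) * (d - 1) = F + 1 := by
    obtain ⟨a, rfl⟩ : ∃ a, e = a + 1 := ⟨e - 1, by omega⟩
    obtain ⟨b, rfl⟩ : ∃ b, d = b + 1 := ⟨d - 1, by omega⟩
    have hab : (a + 1) * (b + 1) = a * b + a + b + 1 := by ring
    simp only [Nat.add_sub_cancel, hF]
    omega
  rw [h1]
  omega

include he hed hcop in
lemma count_A : ((gapF e d).filter (fun n => e < n)).card + (e - 1) = (gapF e d).card := by
  classical
  have hsplit := Finset.card_filter_add_card_filter_not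
    (s := gapF e d) (p := fun n => e < n)
  have h1 : (gapF e d).filter (fun n => ¬ e < n) = Finset.Ioo 0 e := by
    ext n
    simp only [Finset.mem_filter, Finset.mem_Ioo, not_lt]
    rw [mem_gapF he hed hcop]
    constructor
    · rintro ⟨hg, hle⟩
      have h0 : n ≠ 0 := fun h => hg (h ▸ mem_zero hed)
      have hne : n ≠ e := fun h => hg (h ▸ mem_e)
      omega
    · rintro ⟨h0, hlt⟩
      exact ⟨small_gap he hed h0 hlt, by omega⟩
  rw [h1] at hsplit
  simp only [Nat.card_Ioo] at hsplit
  omega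

include he hed hcop in
lemma count_B : ((gapF e d).filter (fun n => d < n)).card + ((d - 1) - (d - 1) / e)
    = (gapF e d).card := by
  classical
  have hsplit := Finset.card_filter_add_card_filter_not
    (s := gapF e d) (p := fun n => d < n)
  have h1 : (gapF e d).filter (fun n => ¬ d < n)
      = (Finset.Ioc 0 (d - 1)).filter (fun n => ¬ e ∣ n) := by
    ext n
    simp only [Finset.mem_filter, Finset.mem_Ioc, not_lt]
    rw [mem_gapF he hed hcop]
    constructor
    · rintro ⟨hg, hle⟩
      have h0 : n ≠ 0 := fun h => hg (h ▸ mem_zero hed)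
      have hne : n ≠ d := fun h => hg (h ▸ mem_d)
      refine ⟨⟨by omega, by omega⟩, fun hdvd => hg ?_⟩
      exact (lt_d_mem_iff he hed (by omega)).mpr hdvd
    · rintro ⟨⟨h0, hle⟩, hnd⟩
      refine ⟨fun hm => hnd ((lt_d_mem_iff he hed (by omega)).mp hm), by omega⟩
  have h2 : ((Finset.Ioc 0 (d - 1)).filter (fun n => e ∣ n)).card
      + ((Finset.Ioc 0 (d - 1)).filter (fun n => ¬ e ∣ n)).card
      = d - 1 := by
    have := Finset.card_filter_add_card_filter_not
      (s := Finset.Ioc 0 (d - 1)) (p := fun n => e ∣ n)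
    rw [this, Nat.card_Ioc]
    omega
  have h3 : ((Finset.Ioc 0 (d - 1)).filter (fun n => e ∣ n)).card = (d - 1) / e := by
    have := Nat.Ioc_filter_dvd_card_eq_div (d - 1) e
    simpa using this
  rw [h1] at hsplit
  omega

include he hed hcop in
lemma div_pred : (d - 1) / e = d / e := by
  have hmod := Nat.div_add_mod d e
  have hm0 : d % e ≠ 0 := fun h0 => e_not_dvd_d he hcop (Nat.dvd_of_mod_eq_zero h0)
  have hlt : d % e < e := Nat.mod_lt _ (by omega)
  have hd1 : d - 1 = e * (d / e) + (d % e - 1) := by omega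
  rw [hd1, Nat.mul_add_div (show 0 < e by omega),
    Nat.div_eq_of_lt (show d % e - 1 < e by omega), Nat.add_zero]

end EwAux

theorem stmt3' (e d : ℕ) (he : 1 < e) (hed : e < d) (hcop : Nat.Coprime e d) :
    {p : ℕ × ℕ | p.1 < p.2 ∧ IsGenerator (EwAux.SS e d) p.1 ∧ p.2 ∉ EwAux.SS e d}.ncard + d + e =
      2 * ((e - 1) * (d - 1) / 2) + d / e + 2 := by
  classical
  have hset : {p : ℕ × ℕ | p.1 < p.2 ∧ IsGenerator (EwAux.SS e d) p.1 ∧ p.2 ∉ EwAux.SS e d}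
      = ↑((({e} : Finset ℕ) ×ˢ (EwAux.gapF e d).filter (fun n => e < n)) ∪
          (({d} : Finset ℕ) ×ˢ (EwAux.gapF e d).filter (fun n => d < n))) := by
    ext ⟨a, b⟩
    simp only [Set.mem_setOf_eq, Finset.coe_union, Set.mem_union, Finset.mem_coe,
      Finset.mem_product, Finset.mem_singleton, Finset.mem_filter]
    rw [EwAux.gen_iff he hed hcop]
    constructor
    · rintro ⟨hab, (h | h), hgap⟩
      · exact Or.inl ⟨h, ⟨(EwAux.mem_gapF he hed hcop).mpr hgap, by omega⟩⟩
      · exact Or.inr ⟨h, ⟨(EwAux.mem_gapF he hed hcop).mpr hgap, by omega⟩⟩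
    · rintro (⟨h, hbg, hlt⟩ | ⟨h, hbg, hlt⟩)
      · exact ⟨by omega, Or.inl h, (EwAux.mem_gapF he hed hcop).mp hbg⟩
      · exact ⟨by omega, Or.inr h, (EwAux.mem_gapF he hed hcop).mp hbg⟩
  rw [hset, Set.ncard_coe_finset, Finset.card_union_of_disjoint (by
      rw [Finset.disjoint_left]
      rintro ⟨p1, p2⟩ hp hq
      simp only [Finset.mem_product, Finset.mem_singleton] at hp hq
      omega),
    Finset.card_product, Finset.card_product]
  simp only [Finset.card_singleton, Nat.one_mul]
  have h1 := EwAux.count_genus he hed hcop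
  have h2 := EwAux.count_A he hed hcop
  have h3 := EwAux.count_B he hed hcop
  have h4 := EwAux.div_pred he hed hcop
  have h5 : d / e < d := Nat.div_lt_self (by omega) he
  omega

theorem stmt3 (e d : ℕ) (he : 1 < e) (hed : e < d) (hcop : Nat.Coprime e d) :
    ew {n : ℕ | ∃ x y : ℕ, n = x * e + y * d} + d + e =
      2 * ((e - 1) * (d - 1) / 2) + d / e + 2 := by
  exact stmt3' e d he hed hcop
end

section
/- For any numerical semigroup S of genus g, ew(S) ≥ g − λ(S), where λ(S) is the number of gaps b of S such that b + a ∈ S for every positive element a ∈ S, and ew(S) is the effective weight of S. -/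
theorem stmt4 (S : Set ℕ) (hS : IsNumericalSemigroup S) :
    genus S ≤ ew S + lambdaS S := by
  classical
  obtain ⟨h0, hG, hadd⟩ := hS
  set G : Set ℕ := {n : ℕ | n ∉ S} with hGdef
  set L : Set ℕ := {b : ℕ | b ∉ S ∧ ∀ a ∈ S, 0 < a → b + a ∈ S} with hL
  set E : Set (ℕ × ℕ) := {p : ℕ × ℕ | p.1 < p.2 ∧ IsGenerator S p.1 ∧ p.2 ∉ S} with hE
  obtain ⟨N, hN⟩ := hG.bddAbove
  have hEfin : E.Finite := by
    apply Set.Finite.subset ((Set.finite_Iic N).prod hG)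
    rintro ⟨a, b⟩ ⟨hab, _, hb⟩
    exact ⟨le_trans hab.le (hN hb), hb⟩
  -- the injection from gaps not in L into E
  let f : ℕ → ℕ × ℕ := fun b =>
    if h : ∃ a, a ∈ S ∧ 0 < a ∧ b + a ∉ S then (Nat.find h, b + Nat.find h) else (0, 0)
  have hex : ∀ b ∈ G \ L, ∃ a, a ∈ S ∧ 0 < a ∧ b + a ∉ S := by
    rintro b ⟨hbG, hbL⟩
    simp only [hL, Set.mem_setOf_eq, not_and] at hbL
    have := hbL hbG
    push_neg at this
    obtain ⟨a, ha, hpos, hout⟩ := this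
    exact ⟨a, ha, hpos, hout⟩
  have hmaps : ∀ b ∈ G \ L, f b ∈ E := by
    intro b hb
    have h := hex b hb
    have hbG : b ∉ S := hb.1
    have hbpos : 0 < b := Nat.pos_of_ne_zero (fun h' => hbG (h' ▸ h0))
    obtain ⟨haS, hapos, hout⟩ := Nat.find_spec h
    simp only [f, dif_pos h]
    refine ⟨by omega, ⟨haS, hapos, ?_⟩, hout⟩
    rintro ⟨x, hx, y, hy, hxpos, hypos, hxy⟩
    have hxlt : x < Nat.find h := by omega
    have hbx : b + x ∈ S := by
      by_contra hc
      exact absurd ⟨hx, hxpos, hc⟩ (Nat.find_min h hxlt)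
    have : (b + x) + y ∈ S := hadd _ hbx _ hy
    exact hout (by rwa [add_assoc, hxy] at this)
  have hinj : Set.InjOn f (G \ L) := by
    intro b hb b' hb' hfe
    have h := hex b hb
    have h' := hex b' hb'
    simp only [f, dif_pos h, dif_pos h', Prod.mk.injEq] at hfe
    omega
  have h1 : (G \ L).ncard ≤ E.ncard :=
    Set.ncard_le_ncard_of_injOn f hmaps hinj hEfin
  have hLG : L ⊆ G := fun b hb => hb.1
  have hGsplit : G = (G \ L) ∪ L := (Set.diff_union_of_subset hLG).symm
  calc genus S = G.ncard := rfl
    _ = ((G \ L) ∪ L).ncard := by rw [← hGsplit]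
    _ ≤ (G \ L).ncard + L.ncard := Set.ncard_union_le _ _
    _ ≤ E.ncard + L.ncard := by omega
    _ = ew S + lambdaS S := rfl
end

section
/- Let S be a numerical semigroup of genus g with smallest and second-smallest generators m and n, and largest gap f. If f > m + n (i.e., S is not secundive), then ew(S) ≥ g. -/
theorem stmt5 (S : Set ℕ) (hS : IsNumericalSemigroup S)
    (m n f : ℕ)
    (hm : IsGenerator S m) (hmmin : ∀ a, IsGenerator S a → m ≤ a)
    (hn : IsGenerator S n) (hnm : n ≠ m) (hnmin : ∀ a, IsGenerator S a → a ≠ m → n ≤ a)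
    (hf : f ∉ S) (hfmax : ∀ b ∉ S, b ≤ f)
    (hns : m + n < f) :
    genus S ≤ ew S := by
  classical
  obtain ⟨h0, hfin, hadd⟩ := hS
  have hmem : m ∈ S := hm.1
  have hmpos : 0 < m := hm.2.1
  have hnmem : n ∈ S := hn.1
  -- m is the minimal positive element
  have hmin : ∀ s, s ∈ S → 0 < s → m ≤ s := by
    intro s
    induction s using Nat.strong_induction_on with
    | _ s ih =>
      intro hs hspos
      by_cases hg : IsGenerator S s
      · exact hmmin s hg
      · have hdec : ∃ x ∈ S, ∃ y ∈ S, 0 < x ∧ 0 < y ∧ x + y = s := by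
          by_contra hc
          exact hg ⟨hs, hspos, hc⟩
        obtain ⟨x, hx, y, hy, hxp, hyp, hxy⟩ := hdec
        have := ih x (by omega) hx hxp
        omega
  -- positive elements below n are multiples of m
  have hdvd : ∀ s, s ∈ S → 0 < s → s < n → m ∣ s := by
    intro s
    induction s using Nat.strong_induction_on with
    | _ s ih =>
      intro hs hspos hsn
      by_cases hg : IsGenerator S s
      · rcases eq_or_ne s m with rfl | hne
        · exact dvd_refl _
        · exact absurd hsn (not_lt.mpr (hnmin s hg hne))
      · have hdec : ∃ x ∈ S, ∃ y ∈ S, 0 < x ∧ 0 < y ∧ x + y = s := by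
          by_contra hc
          exact hg ⟨hs, hspos, hc⟩
        obtain ⟨x, hx, y, hy, hxp, hyp, hxy⟩ := hdec
        have dx := ih x (by omega) hx hxp (by omega)
        have dy := ih y (by omega) hy hyp (by omega)
        rw [← hxy]
        exact Nat.dvd_add dx dy
  have hmn : m < n := lt_of_le_of_ne (hmmin n hn) (Ne.symm hnm)
  have hmult : ∀ k, k * m ∈ S := by
    intro k
    induction k with
    | zero => simpa using h0
    | succ k ih => have := hadd _ ih _ hmem; simpa [Nat.succ_mul] using this
  have hndvd : ¬ m ∣ n := by
    rintro ⟨k, rfl⟩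
    have hk2 : 2 ≤ k := by nlinarith
    have hk : (k - 1) * m ∈ S := hmult (k - 1)
    refine hn.2.2 ⟨m, hmem, (k - 1) * m, hk, hmpos, ?_, ?_⟩
    · have : m ≤ (k-1) * m := Nat.le_mul_of_pos_left m (by omega)
      nlinarith [Nat.sub_one_mul k m]
    · have := Nat.sub_one_mul k m
      have hmk : m ≤ k * m := Nat.le_mul_of_pos_left m (by omega)
      have : m * k = k * m := Nat.mul_comm m k
      omega
  have hnf : n < f := by omega
  have hnmodpos : n % m ≠ 0 := fun h => hndvd (Nat.dvd_of_mod_eq_zero h)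
  have hnmodlt : n % m < m := Nat.mod_lt _ hmpos
  -- the t function
  set t : ℕ → ℕ := fun b => m * (n / m) + b + (if n % m < b then 0 else m) with htdef
  have hdm : m * (n / m) + n % m = n := Nat.div_add_mod n m
  have ht_gt : ∀ b, 1 ≤ b → n < t b := by
    intro b hb
    simp only [htdef]
    split_ifs with h <;> omega
  have ht_le : ∀ b, b < m → t b ≤ n + m := by
    intro b hb
    simp only [htdef]
    split_ifs with h <;> omega
  have ht_mod : ∀ b, b < m → t b % m = b := by
    intro b hb
    simp only [htdef]
    split_ifs with h
    · rw [Nat.add_zero, Nat.mul_add_mod]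
      exact Nat.mod_eq_of_lt hb
    · have : m * (n / m) + b + m = m * (n / m + 1) + b := by ring
      rw [this, Nat.mul_add_mod]
      exact Nat.mod_eq_of_lt hb
  have ht_lt_f : ∀ b, b < m → t b < f := by
    intro b hb
    have := ht_le b hb
    omega
  -- key generator lemma
  have hgen_t : ∀ s, s ∈ S → n < s → s ≤ n + m → s % m ≠ 0 → s % m ≠ n % m →
      IsGenerator S s := by
    intro s hsS hs1 hs2 hs3 hs4
    refine ⟨hsS, by omega, ?_⟩
    rintro ⟨x, hx, y, hy, hxp, hyp, hxy⟩
    have hxm := hmin x hx hxp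
    have hym := hmin y hy hyp
    have hxn : x ≤ n := by omega
    have hyn : y ≤ n := by omega
    rcases eq_or_lt_of_le hxn with hxe | hxl
    · -- x = n, then y = m and s = n + m
      have hym' : y = m := by omega
      have : s = n + m := by omega
      rw [this, Nat.add_mod_right] at hs4
      exact hs4 rfl
    · rcases eq_or_lt_of_le hyn with hye | hyl
      · have hxm' : x = m := by omega
        have : s = m + n := by omega
        rw [this, Nat.add_mod_left] at hs4
        exact hs4 rfl
      · have dx := hdvd x hx hxp hxl
        have dy := hdvd y hy hyp hyl
        have : m ∣ s := hxy ▸ Nat.dvd_add dx dy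
        obtain ⟨k, rfl⟩ := this
        rw [Nat.mul_mod_right] at hs3
        exact hs3 rfl
  -- the injection
  set Φ : ℕ → ℕ × ℕ := fun b =>
    if m < b then (m, b)
    else if b = n % m then (n, f)
    else if t b ∈ S then (t b, f)
    else (n, t b) with hΦdef
  have hsmall : ∀ b, b ∉ S → ¬ m < b → 1 ≤ b ∧ b < m := by
    intro b hb h1
    constructor
    · rcases Nat.eq_zero_or_pos b with rfl | h
      · exact absurd h0 hb
      · exact h
    · rcases eq_or_lt_of_le (Nat.le_of_not_lt h1) with rfl | h
      · exact absurd hmem hb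
      · exact h
  have hmaps : ∀ b ∈ {x : ℕ | x ∉ S}, Φ b ∈
      {p : ℕ × ℕ | p.1 < p.2 ∧ IsGenerator S p.1 ∧ p.2 ∉ S} := by
    intro b hb
    simp only [Set.mem_setOf_eq] at hb ⊢
    simp only [hΦdef]
    split_ifs with h1 h2 h3
    · exact ⟨h1, hm, hb⟩
    · exact ⟨hnf, hn, hf⟩
    · obtain ⟨hb1, hb2⟩ := hsmall b hb h1
      refine ⟨ht_lt_f b hb2, ?_, hf⟩
      refine hgen_t (t b) h3 (ht_gt b hb1) (ht_le b hb2) ?_ ?_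
      · rw [ht_mod b hb2]; omega
      · rw [ht_mod b hb2]; exact h2
    · obtain ⟨hb1, hb2⟩ := hsmall b hb h1
      exact ⟨ht_gt b hb1, hn, h3⟩
  have hinj : Set.InjOn Φ {x : ℕ | x ∉ S} := by
    have key : ∀ b ∈ {x : ℕ | x ∉ S},
        (fun p : ℕ × ℕ => if p.1 = m then p.2
          else if p.2 = f then p.1 % m else p.2 % m) (Φ b) = b := by
      intro b hb
      simp only [Set.mem_setOf_eq] at hb
      simp only [hΦdef]
      by_cases h1 : m < b
      · rw [if_pos h1]
        simp
      · rw [if_neg h1]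
        obtain ⟨c1, c2⟩ := hsmall b hb h1
        by_cases h2 : b = n % m
        · rw [if_pos h2]
          dsimp only
          rw [if_neg (by omega : ¬ n = m), if_pos rfl]
          omega
        · rw [if_neg h2]
          by_cases h3 : t b ∈ S
          · rw [if_pos h3]
            have hg := ht_gt b c1
            dsimp only
            rw [if_neg (by omega : ¬ t b = m), if_pos rfl]
            exact ht_mod b c2
          · rw [if_neg h3]
            have hl := ht_lt_f b c2
            dsimp only
            rw [if_neg (by omega : ¬ n = m), if_neg (by omega : ¬ t b = f)]
            exact ht_mod b c2
    intro b1 hb1 b2 hb2 heq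
    rw [← key b1 hb1, ← key b2 hb2, heq]
  have hEfin : {p : ℕ × ℕ | p.1 < p.2 ∧ IsGenerator S p.1 ∧ p.2 ∉ S}.Finite := by
    refine Set.Finite.subset ((Set.finite_Iic f).prod (Set.finite_Iic f)) ?_
    rintro ⟨a, b⟩ ⟨hab, _, hbS⟩
    have := hfmax b hbS
    exact ⟨by simp; omega, by simpa using this⟩
  exact Set.ncard_le_ncard_of_injOn Φ hmaps hinj hEfin
end

section
/- For an integer k ≥ 2, define slide_k(s) = s if k ∣ s, slide_k(s) = s − 2 if s ≡ 1 (mod k), and slide_k(s) = s − 1 otherwise. Let S be a secundive numerical semigroup with smallest generator m such that m + 1 ∉ S. Then S' = slide_m(S) = {slide_m(s) : s ∈ S} is a numerical semigroup of genus g − 1, where g is the genus of S. -/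
def psi (m t : ℕ) : ℕ :=
  if m ∣ t then t else if t % m = m - 1 then t + 2 else t + 1

lemma mod_shift (m t r : ℕ) (hr : t % m + r < m) : (t + r) % m = t % m + r := by
  conv_lhs => rw [← Nat.div_add_mod t m, Nat.add_assoc, Nat.mul_add_mod]
  exact Nat.mod_eq_of_lt hr

lemma mod_wrap (m t : ℕ) (hm : 2 ≤ m) (h : t % m = m - 1) : (t + 2) % m = 1 := by
  have hd := Nat.div_add_mod t m
  have h3 : t + 2 = m * (t / m + 1) + 1 := by rw [Nat.mul_add, Nat.mul_one]; omega
  rw [h3, Nat.mul_add_mod, Nat.mod_eq_of_lt (by omega)]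

lemma dvd_mod (m t : ℕ) : m ∣ t ↔ t % m = 0 := Nat.dvd_iff_mod_eq_zero

lemma mod_lt' (m t : ℕ) (hm : 2 ≤ m) : t % m < m := Nat.mod_lt t (by omega)

lemma slide_psi (m t : ℕ) (hm : 2 ≤ m) : slide m (psi m t) = t := by
  unfold psi
  split_ifs with h1 h2
  · simp [slide, h1]
  · -- t % m = m - 1, psi = t+2, (t+2)%m = 1
    have hw : (t + 2) % m = 1 := mod_wrap m t hm h2
    have hnd : ¬ m ∣ (t + 2) := by rw [dvd_mod]; omega
    simp [slide, hnd, hw]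
  · -- t % m ∈ [1, m-2]
    rw [dvd_mod] at h1
    have hlt := mod_lt' m t hm
    have hs : (t + 1) % m = t % m + 1 := mod_shift m t 1 (by omega)
    have hnd : ¬ m ∣ (t + 1) := by rw [dvd_mod]; omega
    have : (t + 1) % m ≠ 1 := by omega
    simp [slide, hnd, this]

lemma psi_slide (m x : ℕ) (hm : 2 ≤ m) (hx : x ≠ 1) : psi m (slide m x) = x := by
  unfold slide
  split_ifs with h1 h2
  · simp [psi, h1]
  · -- x % m = 1, x ≥ m+1
    rw [dvd_mod] at h1
    have hd := Nat.div_add_mod x m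
    have hq : 1 ≤ x / m := by
      rcases Nat.eq_zero_or_pos (x / m) with h | h
      · rw [h, Nat.mul_zero] at hd; omega
      · exact h
    -- x - 2 = m*(x/m - 1) + (m - 1)
    have h3 : x - 2 = m * (x / m - 1) + (m - 1) := by
      have : m * (x / m - 1) = m * (x/m) - m := by rw [Nat.mul_sub, Nat.mul_one]
      have hmle : m ≤ m * (x / m) := Nat.le_mul_of_pos_right m hq
      omega
    have hmod : (x - 2) % m = m - 1 := by
      rw [h3, Nat.mul_add_mod, Nat.mod_eq_of_lt (by omega)]
    have hnd : ¬ m ∣ (x - 2) := by rw [dvd_mod]; omega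
    have hx2 : 2 ≤ x := by
      have hmle : m ≤ m * (x / m) := Nat.le_mul_of_pos_right m hq
      omega
    simp only [psi, hnd, if_false, hmod, if_true, if_pos rfl]
    omega
  · -- x % m ≥ 2
    rw [dvd_mod] at h1
    have hlt := mod_lt' m x hm
    have hx2 : 2 ≤ x % m := by omega
    have hxge : 2 ≤ x := Nat.le_trans hx2 (Nat.mod_le x m)
    have hmod : (x - 1) % m = x % m - 1 := by
      have hd := Nat.div_add_mod x m
      have h3 : x - 1 = m * (x / m) + (x % m - 1) := by omega
      rw [h3, Nat.mul_add_mod, Nat.mod_eq_of_lt (by omega)]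
    have hnd : ¬ m ∣ (x - 1) := by rw [dvd_mod]; omega
    have hne : (x - 1) % m ≠ m - 1 := by omega
    simp only [psi, hnd, if_false, hne]
    omega

lemma psi_add_left (m a b : ℕ) (hm : 2 ≤ m) (h : m ∣ a) : psi m (a + b) = a + psi m b := by
  obtain ⟨k, rfl⟩ := h
  have hdvd : m ∣ (m * k + b) ↔ m ∣ b := by
    constructor
    · intro h; exact (Nat.dvd_add_right (Dvd.intro k rfl)).mp h
    · intro h; exact Dvd.dvd.add (Dvd.intro k rfl) h
  have hmod : (m * k + b) % m = b % m := Nat.mul_add_mod m k b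
  unfold psi
  split_ifs <;> omega

lemma psi_ge (m t : ℕ) (h : ¬ m ∣ t) : t + 1 ≤ psi m t := by
  unfold psi; split_ifs <;> omega

lemma psi_le (m t : ℕ) : psi m t ≤ t + 2 := by
  unfold psi; split_ifs <;> omega

lemma psi_not_dvd (m t : ℕ) (hm : 2 ≤ m) (h : ¬ m ∣ t) : ¬ m ∣ psi m t := by
  have h' := h
  rw [dvd_mod] at h'
  have hlt := mod_lt' m t hm
  unfold psi
  split_ifs with h1
  · rw [dvd_mod, mod_wrap m t hm h1]; omega
  · rw [dvd_mod, mod_shift m t 1 (by omega)]; omega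

lemma psi_ne_one (m t : ℕ) (hm : 2 ≤ m) : psi m t ≠ 1 := by
  unfold psi
  split_ifs with h1 h2
  · intro h; subst h; exact absurd (Nat.le_of_dvd one_pos h1) (by omega)
  · omega
  · intro h
    have : t = 0 := by omega
    subst this
    exact h1 (Dvd.intro 0 rfl)

lemma psi_zero (m : ℕ) : psi m 0 = 0 := by simp [psi]


theorem stmt6 (S : Set ℕ) (hS : IsNumericalSemigroup S) (hsec : Secundive S)
    (m : ℕ) (hm : IsGenerator S m) (hmmin : ∀ a, IsGenerator S a → m ≤ a)
    (hm1 : m + 1 ∉ S) :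
    IsNumericalSemigroup (slide m '' S) ∧ genus (slide m '' S) = genus S - 1 := by

  classical
  obtain ⟨h0, hfin, hadd⟩ := hS
  obtain ⟨hmS, hmpos, hmng⟩ := id hm
  -- multiples of m are in S
  have hmul1 : ∀ k : ℕ, m * (k + 1) ∈ S := by
    intro k
    induction k with
    | zero => simpa using hmS
    | succ k ih =>
      have he : m * (k + 1 + 1) = m * (k + 1) + m := by ring
      rw [he]; exact hadd _ ih _ hmS
  have hmul : ∀ k : ℕ, 0 < k → m * k ∈ S := by
    intro k hk
    obtain ⟨j, rfl⟩ : ∃ j, k = j + 1 := ⟨k - 1, by omega⟩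
    exact hmul1 j
  -- m is the smallest positive element
  have hmin : ∀ s, s ∈ S → 0 < s → m ≤ s := by
    intro s
    induction s using Nat.strong_induction_on with
    | _ s ih =>
      intro hs hpos
      by_cases hgen : ∃ x ∈ S, ∃ y ∈ S, 0 < x ∧ 0 < y ∧ x + y = s
      · obtain ⟨x, hx, y, hy, hxp, hyp, hxy⟩ := hgen
        have := ih x (by omega) hx hxp
        omega
      · exact hmmin s ⟨hs, hpos, hgen⟩
  have hm2 : 2 ≤ m := by
    by_contra h
    have hmeq : m = 1 := by omega
    subst hmeq
    exact hm1 (hadd 1 hmS 1 hmS)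
  have h1S : 1 ∉ S := fun h => by have := hmin 1 h one_pos; omega
  -- existence of an element of S not divisible by m
  have hex : ∃ s, s ∈ S ∧ ¬ m ∣ s := by
    by_contra h
    push_neg at h
    have hsub : Set.range (fun k : ℕ => m * k + 1) ⊆ {n : ℕ | n ∉ S} := by
      rintro x ⟨k, rfl⟩
      intro hx
      have hd := h _ hx
      have : m ∣ 1 := (Nat.dvd_add_right ⟨k, rfl⟩).mp hd
      have := Nat.le_of_dvd one_pos this
      omega
    have hinj : Function.Injective (fun k : ℕ => m * k + 1) := by
      intro a b hab
      simp only [Nat.add_right_cancel_iff] at hab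
      exact Nat.eq_of_mul_eq_mul_left (by omega) hab
    exact (Set.infinite_range_of_injective hinj) (hfin.subset hsub)
  set n := Nat.find hex with hn_def
  have hnS : n ∈ S := (Nat.find_spec hex).1
  have hnd : ¬ m ∣ n := (Nat.find_spec hex).2
  have hnmin : ∀ s, s ∈ S → ¬ m ∣ s → n ≤ s := fun s hs hd => Nat.find_min' hex ⟨hs, hd⟩
  have hnpos : 0 < n := by
    rcases Nat.eq_zero_or_pos n with h | h
    · exact absurd (h ▸ Dvd.intro 0 rfl) hnd
    · exact h
  have hngen : IsGenerator S n := by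
    refine ⟨hnS, hnpos, ?_⟩
    rintro ⟨x, hx, y, hy, hxp, hyp, hxy⟩
    by_cases hdx : m ∣ x
    · have hdy : ¬ m ∣ y := fun hdy => hnd (hxy ▸ Dvd.dvd.add hdx hdy)
      have := hnmin y hy hdy
      omega
    · have := hnmin x hx hdx
      omega
  have hnm : n ≠ m := fun h => hnd (h ▸ dvd_refl m)
  have hn2 : m + 2 ≤ n := by
    have h1 := hmin n hnS hnpos
    have h2 : n ≠ m + 1 := fun h => hm1 (h ▸ hnS)
    omega
  have hnmin' : ∀ a, IsGenerator S a → a ≠ m → n ≤ a := by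
    intro a ha hanem
    by_cases hda : m ∣ a
    · exfalso
      obtain ⟨k, rfl⟩ := hda
      have hk2 : 2 ≤ k := by
        have hapos := ha.2.1
        have : k ≠ 0 := fun h => by simp [h] at hapos
        have : k ≠ 1 := fun h => hanem (by simp [h])
        omega
      have hmk : m ≤ m * k := Nat.le_mul_of_pos_right m (by omega)
      have hmk1 : m * (k - 1) = m * k - m := by rw [Nat.mul_sub, Nat.mul_one]
      exact ha.2.2 ⟨m, hmS, m * (k - 1), hmul (k - 1) (by omega),
        hmpos, by omega, by omega⟩
    · exact hnmin a ha.1 hda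
  -- conductor bound
  have hcond : ∀ x, m + n ≤ x → x ∈ S := by
    intro x hx
    by_contra hxS
    have := hsec x m n hxS hm hmmin hngen hnm hnmin'
    omega
  -- the image as a preimage
  have hT : slide m '' S = {t : ℕ | psi m t ∈ S} := by
    ext t
    constructor
    · rintro ⟨s, hs, rfl⟩
      have hs1 : s ≠ 1 := fun h => h1S (h ▸ hs)
      simpa [Set.mem_setOf_eq, psi_slide m s hm2 hs1] using hs
    · intro ht
      exact ⟨psi m t, ht, slide_psi m t hm2⟩
  rw [hT]
  have hinjpsi : Function.Injective (psi m) := by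
    intro a b hab
    have := slide_psi m a hm2
    rw [hab, slide_psi m b hm2] at this
    exact this.symm
  constructor
  · refine ⟨?_, ?_, ?_⟩
    · show psi m 0 ∈ S
      rw [psi_zero]; exact h0
    · have hsub : {t : ℕ | t ∉ {t : ℕ | psi m t ∈ S}} ⊆ psi m ⁻¹' {n : ℕ | n ∉ S} := by
        intro t ht; exact ht
      exact (hfin.preimage hinjpsi.injOn).subset hsub
    · intro a ha b hb
      simp only [Set.mem_setOf_eq] at ha hb ⊢
      by_cases hda : m ∣ a
      · rw [psi_add_left m a b hm2 hda]
        have haS : a ∈ S := by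
          have : psi m a = a := by simp [psi, hda]
          rwa [this] at ha
        exact hadd a haS _ hb
      · by_cases hdb : m ∣ b
        · rw [add_comm, psi_add_left m b a hm2 hdb]
          have hbS : b ∈ S := by
            have : psi m b = b := by simp [psi, hdb]
            rwa [this] at hb
          exact hadd b hbS _ ha
        · by_cases hdab : m ∣ (a + b)
          · have hpe : psi m (a + b) = a + b := by simp [psi, hdab]
            rw [hpe]
            obtain ⟨k, hk⟩ := hdab
            have hapos : 0 < a := by
              rcases Nat.eq_zero_or_pos a with h | h
              · exact absurd (h ▸ Dvd.intro 0 rfl) hda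
              · exact h
            have hkpos : 0 < k := by
              rcases Nat.eq_zero_or_pos k with h | h
              · rw [h, Nat.mul_zero] at hk; omega
              · exact h
            rw [hk]; exact hmul k hkpos
          · have hpa := hnmin _ ha (psi_not_dvd m a hm2 hda)
            have hpb := hnmin _ hb (psi_not_dvd m b hm2 hdb)
            have hla := psi_le m a
            have hlb := psi_le m b
            have hge := psi_ge m (a + b) hdab
            apply hcond
            rcases Nat.lt_or_ge (a + b + 1) (m + n) with hlt | hge2
            · exfalso
              have haeq : a = m := by omega
              exact hda (haeq ▸ dvd_refl m)
            · omega
  · -- genus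
    show {t : ℕ | t ∉ {t : ℕ | psi m t ∈ S}}.ncard = genus S - 1
    have hset : {t : ℕ | t ∉ {t : ℕ | psi m t ∈ S}} = {t : ℕ | psi m t ∉ S} := rfl
    rw [hset]
    have himg : psi m '' {t : ℕ | psi m t ∉ S} = {x : ℕ | x ∉ S} \ {1} := by
      ext x
      constructor
      · rintro ⟨t, ht, rfl⟩
        exact ⟨ht, psi_ne_one m t hm2⟩
      · rintro ⟨hxS, hx1⟩
        simp only [Set.mem_singleton_iff] at hx1
        refine ⟨slide m x, ?_, psi_slide m x hm2 hx1⟩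
        show psi m (slide m x) ∉ S
        rw [psi_slide m x hm2 hx1]
        exact hxS
    have hcard : {t : ℕ | psi m t ∉ S}.ncard = ({x : ℕ | x ∉ S} \ {1}).ncard := by
      rw [← himg, Set.ncard_image_of_injective _ hinjpsi]
    rw [hcard]
    have h1mem : (1 : ℕ) ∈ {x : ℕ | x ∉ S} := h1S
    rw [show genus S = {x : ℕ | x ∉ S}.ncard from rfl]
    rw [Set.ncard_diff_singleton_of_mem h1mem]
end

section
/- Let S be a secundive numerical semigroup with smallest generator m such that m + 1 ∉ S, and let S' = slide_m(S). Then S' is secundive and ew(S') = ew(S) − 1. -/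
/-- The inverse of the slide operation. -/
def unslide (k x : ℕ) : ℕ :=
  if k ∣ x then x else if x % k = k - 1 then x + 2 else x + 1

lemma modk (k q r : ℕ) (hr : r < k) : (k*q+r) % k = r := by
  rw [Nat.mul_add_mod, Nat.mod_eq_of_lt hr]

lemma dvdk (k q r : ℕ) (hr : r < k) : k ∣ (k*q+r) ↔ r = 0 := by
  rw [Nat.dvd_iff_mod_eq_zero, modk k q r hr]

lemma decompk (k x : ℕ) (hk : 0 < k) : ∃ q r, x = k*q + r ∧ r < k :=
  ⟨x/k, x%k, by rw [Nat.div_add_mod], Nat.mod_lt _ hk⟩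

lemma us1 (k x : ℕ) (hk : 2 ≤ k) : slide k (unslide k x) = x := by
  obtain ⟨q, r, rfl, hr⟩ := decompk k x (by omega)
  rw [unslide]
  by_cases h0 : r = 0
  · rw [if_pos ((dvdk k q r hr).mpr h0), slide, if_pos ((dvdk k q r hr).mpr h0)]
  · rw [if_neg (fun h => h0 ((dvdk k q r hr).mp h))]
    by_cases h1 : r = k - 1
    · rw [if_pos (by rw [modk k q r hr]; exact h1)]
      have e : k*q + r + 2 = k*(q+1) + 1 := by
        have : k*(q+1) = k*q + k := by ring
        omega
      rw [e, slide, if_neg (by rw [dvdk k (q+1) 1 (by omega)]; omega),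
        if_pos (modk k (q+1) 1 (by omega))]
      omega
    · rw [if_neg (by rw [modk k q r hr]; exact h1)]
      have e : k*q + r + 1 = k*q + (r+1) := by omega
      rw [e, slide, if_neg (by rw [dvdk k q (r+1) (by omega)]; omega),
        if_neg (by rw [modk k q (r+1) (by omega)]; omega)]
      omega

lemma us2 (k s : ℕ) (hk : 2 ≤ k) (hs : s ≠ 1) : unslide k (slide k s) = s := by
  obtain ⟨q, r, rfl, hr⟩ := decompk k s (by omega)
  rw [slide]
  by_cases h0 : r = 0
  · rw [if_pos ((dvdk k q r hr).mpr h0), unslide, if_pos ((dvdk k q r hr).mpr h0)]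
  · rw [if_neg (fun h => h0 ((dvdk k q r hr).mp h))]
    by_cases h1 : r = 1
    · rw [if_pos (by rw [modk k q r hr]; exact h1)]
      have hq : 1 ≤ q := by
        rcases Nat.eq_zero_or_pos q with h | h
        · subst h; omega
        · exact h
      have hkq : k*q = k*(q-1) + k := by
        have hq' : q = (q-1) + 1 := by omega
        calc k*q = k*((q-1)+1) := by rw [← hq']
        _ = k*(q-1) + k := by ring
      have e : k*q + r - 2 = k*(q-1) + (k-1) := by omega
      rw [e, unslide, if_neg (by rw [dvdk k (q-1) (k-1) (by omega)]; omega),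
        if_pos (modk k (q-1) (k-1) (by omega))]
      omega
    · rw [if_neg (by rw [modk k q r hr]; exact h1)]
      have e : k*q + r - 1 = k*q + (r-1) := by omega
      rw [e, unslide, if_neg (by rw [dvdk k q (r-1) (by omega)]; omega),
        if_neg (by rw [modk k q (r-1) (by omega)]; omega)]
      omega

lemma us3 (k x : ℕ) : x ≤ unslide k x ∧ unslide k x ≤ x + 2 := by
  rw [unslide]; split <;> [omega; skip]; split <;> omega

lemma us4 (k x z : ℕ) (hk : 2 ≤ k) (hz : k ∣ z) : unslide k (x + z) = unslide k x + z := by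
  obtain ⟨c, rfl⟩ := hz
  obtain ⟨q, r, rfl, hr⟩ := decompk k x (by omega)
  have e : k*q + r + k*c = k*(q+c) + r := by ring_nf
  rw [e, unslide, unslide]
  by_cases h0 : r = 0
  · rw [if_pos ((dvdk k (q+c) r hr).mpr h0), if_pos ((dvdk k q r hr).mpr h0)]; ring
  · rw [if_neg (fun h => h0 ((dvdk k (q+c) r hr).mp h)),
      if_neg (fun h => h0 ((dvdk k q r hr).mp h)), modk k (q+c) r hr, modk k q r hr]
    split <;> ring

lemma us5 (k x : ℕ) (h : k ∣ x) : unslide k x = x := by rw [unslide, if_pos h]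

lemma us6 (k x : ℕ) (h : ¬ k ∣ x) : x + 1 ≤ unslide k x := by
  rw [unslide, if_neg h]; split <;> omega

lemma sl1 (k s : ℕ) (h : k ∣ s) : slide k s = s := by rw [slide, if_pos h]

lemma sl2 (k s : ℕ) (h : ¬ k ∣ s) : s - 2 ≤ slide k s ∧ slide k s ≤ s - 1 := by
  rw [slide, if_neg h]; split <;> omega

lemma usdvd (k x : ℕ) (hk : 2 ≤ k) : k ∣ unslide k x ↔ k ∣ x := by
  constructor
  · intro h
    by_contra hx
    have h6 := us6 k x hx
    have h1 := us1 k x hk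
    rw [sl1 k _ h] at h1
    omega
  · intro h; rw [us5 k x h]; exact h

theorem stmt7 (S : Set ℕ) (hS : IsNumericalSemigroup S) (hsec : Secundive S)
    (m : ℕ) (hm : IsGenerator S m) (hmmin : ∀ a, IsGenerator S a → m ≤ a)
    (hm1 : m + 1 ∉ S) :
    Secundive (slide m '' S) ∧ ew (slide m '' S) = ew S - 1 := by
  classical
  obtain ⟨h0S, hfin, hadd⟩ := hS
  -- m ≥ 2
  have hm2 : 2 ≤ m := by
    obtain ⟨hmS, hmpos, -⟩ := hm
    by_contra h
    have hme : m = 1 := by omega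
    subst hme
    exact hm1 (hadd 1 hmS 1 hmS)
  -- positive elements are ≥ m
  have Hpos : ∀ s, s ∈ S → 0 < s → m ≤ s := by
    intro s
    induction s using Nat.strong_induction_on with
    | _ s ih =>
      intro hs hpos
      by_cases hdec : ∃ x ∈ S, ∃ y ∈ S, 0 < x ∧ 0 < y ∧ x + y = s
      · obtain ⟨x, hx, y, hy, hxp, hyp, hxy⟩ := hdec
        have := ih x (by omega) hx hxp
        omega
      · exact hmmin s ⟨hs, hpos, hdec⟩
  -- multiples of m are in S
  have Hmult : ∀ z, m ∣ z → z ∈ S := by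
    rintro z ⟨c, rfl⟩
    induction c with
    | zero => simpa using h0S
    | succ c ih =>
      have h := hadd (m*c) ih m hm.1
      have e : m*(c+1) = m*c + m := by ring
      rw [e]; exact h
  -- elements ≡ 1 (mod m) are ≥ 2m+1
  have Hone : ∀ s, s ∈ S → s % m = 1 → 2*m+1 ≤ s := by
    intro s hs hsm
    have hs0 : s ≠ 0 := by rintro rfl; rw [Nat.zero_mod] at hsm; omega
    have hgem := Hpos s hs (by omega)
    obtain ⟨q, r, rfl, hr⟩ := decompk m s (by omega)
    have hr1 : r = 1 := by rw [modk m q r hr] at hsm; exact hsm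
    subst hr1
    have hq1 : 1 ≤ q := by
      by_contra h
      have hq0 : q = 0 := by omega
      subst hq0
      simp at hgem
      omega
    rcases eq_or_lt_of_le hq1 with h | h
    · exfalso
      apply hm1
      have e : m*q + 1 = m + 1 := by rw [← h]; ring
      rw [e] at hs; exact hs
    · have : 2*m ≤ m*q := by
        calc 2*m = m*2 := by ring
        _ ≤ m*q := Nat.mul_le_mul_left m h
      omega
  -- bound beyond which everything is in S
  obtain ⟨B, hB⟩ : ∃ B, ∀ x, B ≤ x → x ∈ S := by
    obtain ⟨B0, hB0⟩ := hfin.bddAbove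
    exact ⟨B0+1, fun x hx => by
      by_contra h
      have := hB0 (show x ∈ {n : ℕ | n ∉ S} from h)
      omega⟩
  -- the second generator n : smallest non-multiple of m in S
  have hnex : ∃ nn, nn ∈ S ∧ ¬ m ∣ nn := by
    refine ⟨m*B+1, hB _ ?_, by rw [dvdk m B 1 (by omega)]; omega⟩
    have : B ≤ m*B := Nat.le_mul_of_pos_left B (by omega)
    omega
  set n := Nat.find hnex with hndef
  have hnS : n ∈ S := (Nat.find_spec hnex).1
  have hnnd : ¬ m ∣ n := (Nat.find_spec hnex).2
  have hnmin' : ∀ s, s ∈ S → ¬ m ∣ s → n ≤ s := fun s hs hd => Nat.find_min' hnex ⟨hs, hd⟩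
  have hnm2 : m + 2 ≤ n := by
    have hpos : 0 < n := by
      rcases Nat.eq_zero_or_pos n with h | h
      · exfalso; exact hnnd (h ▸ dvd_zero m)
      · exact h
    have h1 := Hpos n hnS hpos
    have h2 : n ≠ m := fun h => hnnd (h ▸ dvd_refl m)
    have h3 : n ≠ m + 1 := fun h => hm1 (h ▸ hnS)
    omega
  have hngen : IsGenerator S n := by
    refine ⟨hnS, by omega, ?_⟩
    rintro ⟨x, hx, y, hy, hxp, hyp, hxy⟩
    by_cases hdx : m ∣ x
    · by_cases hdy : m ∣ y
      · exact hnnd (hxy ▸ dvd_add hdx hdy)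
      · have h1 := hnmin' y hy hdy
        have h2 := Hpos x hx hxp
        omega
    · have h1 := hnmin' x hx hdx
      have h2 := Hpos y hy hyp
      omega
  have hgennd : ∀ a, IsGenerator S a → a ≠ m → ¬ m ∣ a := by
    rintro a ⟨haS, hap, hnd⟩ hne hd
    apply hnd
    have ham : m ≤ a := Hpos a haS hap
    have hlt : m < a := lt_of_le_of_ne ham (Ne.symm hne)
    exact ⟨m, hm.1, a - m, Hmult _ (Nat.dvd_sub hd dvd_rfl), by omega, by omega, by omega⟩
  have hnmin : ∀ a, IsGenerator S a → a ≠ m → n ≤ a :=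
    fun a ha hne => hnmin' a ha.1 (hgennd a ha hne)
  have hnem : n ≠ m := fun h => hnnd (h ▸ dvd_refl m)
  have hgap : ∀ b, b ∉ S → b < m + n := fun b hb => hsec b m n hb hm hmmin hngen hnem hnmin
  -- the slid semigroup
  set S' := slide m '' S with hS'def
  have memS' : ∀ x, x ∈ S' ↔ unslide m x ∈ S := by
    intro x
    constructor
    · rintro ⟨s, hs, rfl⟩
      rcases Nat.eq_zero_or_pos s with h | h
      · subst h
        rw [sl1 m 0 (dvd_zero m), us5 m 0 (dvd_zero m)]
        exact h0S
      · have hsm := Hpos s hs h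
        rw [us2 m s hm2 (by omega)]
        exact hs
    · intro h
      exact ⟨unslide m x, h, us1 m x hm2⟩
  have HmultS' : ∀ z, m ∣ z → z ∈ S' := fun z hz =>
    (memS' z).mpr (by rw [us5 m z hz]; exact Hmult z hz)
  have HnonmS' : ∀ x, x ∈ S' → ¬ m ∣ x →
      (n - 2 ≤ x ∧ m + 1 ≤ x ∧ (x % m ≠ m - 1 → n - 1 ≤ x)) := by
    intro x hx hnd
    have hu : unslide m x ∈ S := (memS' x).mp hx
    obtain ⟨q, r, rfl, hr⟩ := decompk m x (by omega)
    have hr0 : r ≠ 0 := fun h => hnd ((dvdk m q r hr).mpr h)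
    rw [unslide, if_neg hnd, modk m q r hr] at hu
    by_cases h1 : r = m - 1
    · rw [if_pos h1] at hu
      have e : m*q + r + 2 = m*(q+1) + 1 := by
        have : m*(q+1) = m*q + m := by ring
        omega
      have h2m := Hone _ hu (by rw [e, modk m (q+1) 1 (by omega)])
      have hn' := hnmin' _ hu (by rw [e, dvdk m (q+1) 1 (by omega)]; omega)
      refine ⟨by omega, by omega, fun hc => ?_⟩
      exfalso; apply hc; rw [modk m q r hr]; exact h1
    · rw [if_neg h1] at hu
      have e : m*q + r + 1 = m*q + (r+1) := by omega
      have hn' := hnmin' _ hu (by rw [e, dvdk m q (r+1) (by omega)]; omega)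
      exact ⟨by omega, by omega, fun _ => by omega⟩
  have HposS' : ∀ x, x ∈ S' → 0 < x → m ≤ x := by
    intro x hx hp
    by_cases hd : m ∣ x
    · have he : unslide m x = x := us5 m x hd
      have := (memS' x).mp hx
      rw [he] at this
      exact Hpos x this hp
    · have := HnonmS' x hx hd
      omega
  have hmS' : m ∈ S' := HmultS' m dvd_rfl
  have hmgenS' : IsGenerator S' m := by
    refine ⟨hmS', by omega, ?_⟩
    rintro ⟨x, hx, y, hy, hxp, hyp, hxy⟩
    have h1 := HposS' x hx hxp
    have h2 := HposS' y hy hyp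
    omega
  have hgennd' : ∀ a, IsGenerator S' a → a ≠ m → ¬ m ∣ a := by
    rintro a ⟨haS, hap, hnd⟩ hne hd
    apply hnd
    have ham : m ≤ a := HposS' a haS hap
    have hlt : m < a := lt_of_le_of_ne ham (Ne.symm hne)
    exact ⟨m, hmS', a - m, HmultS' _ (Nat.dvd_sub hd dvd_rfl), by omega, by omega, by omega⟩
  have gapnd' : ∀ x, x ∉ S' → ¬ m ∣ x := fun x hx hd => hx (HmultS' x hd)
  have gapS' : ∀ x, x ∉ S' → unslide m x ∉ S := fun x hx h => hx ((memS' x).mpr h)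
  -- Secundive S'
  have hsec' : Secundive S' := by
    intro f m0 n0 hf hm0 hm0min hn0 hn0ne hn0min
    have hm0m : m = m0 := le_antisymm (HposS' m0 hm0.1 hm0.2.1) (hm0min m hmgenS')
    subst hm0m
    have hfd : ¬ m ∣ f := gapnd' f hf
    have hfu : unslide m f ∉ S := gapS' f hf
    have hflt := hgap _ hfu
    have hn0d : ¬ m ∣ n0 := hgennd' n0 hn0 hn0ne
    have hn0b := HnonmS' n0 hn0.1 hn0d
    obtain ⟨q, r, rfl, hr⟩ := decompk m f (by omega)
    have hr0 : r ≠ 0 := fun h => hfd ((dvdk m q r hr).mpr h)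
    by_cases h1 : r = m - 1
    · have hval : unslide m (m*q+r) = m*q+r+2 := by
        rw [unslide, if_neg hfd, modk m q r hr, if_pos h1]
      rw [hval] at hflt
      have := hn0b.1
      omega
    · have hval : unslide m (m*q+r) = m*q+r+1 := by
        rw [unslide, if_neg hfd, modk m q r hr, if_neg h1]
      rw [hval] at hflt
      rcases Nat.lt_or_ge n0 (n-1) with hlt | hge
      · have hn0mod : n0 % m = m - 1 := by
          by_contra hc
          have := hn0b.2.2 hc
          omega
        by_contra hc
        push_neg at hc
        have hfeq : m*q+r = m + n0 := by
          have := hn0b.1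
          omega
        have hrval : r = m - 1 := by
          have h3 : (m + n0) % m = n0 % m := Nat.add_mod_left m n0
          have h4 : (m*q+r) % m = r := modk m q r hr
          rw [hfeq, h3, hn0mod] at h4
          omega
        exact h1 hrval
      · omega
  -- C2 : small generators of S' pull back to generators of S
  have C2 : ∀ a b, IsGenerator S' a → a ≠ m → b ∉ S' → a < b →
      IsGenerator S (unslide m a) := by
    intro a b ha hne hb hab
    have had : ¬ m ∣ a := hgennd' a ha hne
    have hbu : unslide m b ∉ S := gapS' b hb
    have hbd : ¬ m ∣ b := gapnd' b hb
    have hblt := hgap _ hbu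
    have hb6 := us6 m b hbd
    have hua2 := (us3 m a).2
    have hua1 := (us3 m a).1
    have haS : unslide m a ∈ S := (memS' a).mp ha.1
    have hapos := ha.2.1
    refine ⟨haS, by omega, ?_⟩
    rintro ⟨x, hx, y, hy, hxp, hyp, hxy⟩
    have huad : ¬ m ∣ unslide m a := fun h => had ((usdvd m a hm2).mp h)
    by_cases hdx : m ∣ x
    · apply ha.2.2
      have hym : m ≤ y := Hpos y hy hyp
      have hxm : m ≤ x := Hpos x hx hxp
      have hxa : x ≤ a := by
        by_contra h
        push_neg at h
        omega
      have hkey : unslide m a = unslide m (a - x) + x := by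
        have h4 := us4 m (a-x) x hm2 hdx
        have e : a - x + x = a := by omega
        rw [e] at h4
        exact h4
      have hyv : y = unslide m (a - x) := by omega
      have hyd : ¬ m ∣ y := fun h => huad (by rw [← hxy]; exact dvd_add hdx h)
      have hyn : n ≤ y := hnmin' y hy hyd
      have hax3 := (us3 m (a-x)).2
      refine ⟨x, HmultS' x hdx, a - x, (memS' (a-x)).mpr (by rw [← hyv]; exact hy),
        hxp, by omega, by omega⟩
    · by_cases hdy : m ∣ y
      · apply ha.2.2
        have hym : m ≤ y := Hpos y hy hyp
        have hxm : m ≤ x := Hpos x hx hxp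
        have hya : y ≤ a := by
          by_contra h
          push_neg at h
          omega
        have hkey : unslide m a = unslide m (a - y) + y := by
          have h4 := us4 m (a-y) y hm2 hdy
          have e : a - y + y = a := by omega
          rw [e] at h4
          exact h4
        have hxv : x = unslide m (a - y) := by omega
        have hxd : ¬ m ∣ x := fun h => huad (by rw [← hxy]; exact dvd_add h hdy)
        have hxn : n ≤ x := hnmin' x hx hxd
        have hay3 := (us3 m (a-y)).2
        refine ⟨a - y, (memS' (a-y)).mpr (by rw [← hxv]; exact hx), y, HmultS' y hdy,
          by omega, hyp, by omega⟩
      · have hxn := hnmin' x hx hdx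
        have hyn := hnmin' y hy hdy
        omega
  -- C1 : small generators of S map to generators of S'
  have C1 : ∀ a b, IsGenerator S a → a ≠ m → b ∉ S → a < b →
      IsGenerator S' (slide m a) := by
    intro a b ha hne hb hab
    have had : ¬ m ∣ a := hgennd a ha hne
    have hblt := hgap b hb
    have hsl := sl2 m a had
    have han : n ≤ a := hnmin' a ha.1 had
    have haS' : slide m a ∈ S' := ⟨a, ha.1, rfl⟩
    have hus : unslide m (slide m a) = a := us2 m a hm2 (by omega)
    refine ⟨haS', by omega, ?_⟩
    rintro ⟨x, hx, y, hy, hxp, hyp, hxy⟩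
    by_cases hdx : m ∣ x
    · apply ha.2.2
      have hxS : x ∈ S := by
        have := (memS' x).mp hx
        rwa [us5 m x hdx] at this
      have hyu : unslide m y ∈ S := (memS' y).mp hy
      have hkey : unslide m (y + x) = unslide m y + x := us4 m y x hm2 hdx
      have hval : unslide m y + x = a := by
        rw [← hkey, show y + x = slide m a by omega]
        exact hus
      have hy3 := (us3 m y).1
      exact ⟨x, hxS, unslide m y, hyu, hxp, by omega, by omega⟩
    · by_cases hdy : m ∣ y
      · apply ha.2.2
        have hyS : y ∈ S := by
          have := (memS' y).mp hy
          rwa [us5 m y hdy] at this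
        have hxu : unslide m x ∈ S := (memS' x).mp hx
        have hkey : unslide m (x + y) = unslide m x + y := us4 m x y hm2 hdy
        have hval : unslide m x + y = a := by
          rw [← hkey, show x + y = slide m a from hxy]
          exact hus
        have hx3 := (us3 m x).1
        exact ⟨unslide m x, hxu, y, hyS, by omega, hyp, by omega⟩
      · have hxb := HnonmS' x hx hdx
        have hyb := HnonmS' y hy hdy
        omega
  -- the pair sets
  set P := {p : ℕ × ℕ | p.1 < p.2 ∧ IsGenerator S p.1 ∧ p.2 ∉ S} with hPdef
  set P' := {p : ℕ × ℕ | p.1 < p.2 ∧ IsGenerator S' p.1 ∧ p.2 ∉ S'} with hP'def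
  have hPfin : P.Finite := by
    apply Set.Finite.subset ((Set.finite_Iio B).prod (Set.finite_Iio B))
    rintro ⟨a, b⟩ ⟨hab, hgen, hga⟩
    have hbB : b < B := by
      by_contra h
      exact hga (hB b (by omega))
    exact ⟨show a < B by omega, hbB⟩
  have hmem : (m, m+1) ∈ P := ⟨by omega, hm, hm1⟩
  -- forward map
  have B1 : ∀ p ∈ P \ {(m, m+1)}, (slide m p.1, slide m p.2) ∈ P' := by
    rintro ⟨a, b⟩ ⟨⟨hab, hgen, hga⟩, hne⟩
    simp only [Set.mem_singleton_iff, Prod.mk.injEq, not_and] at hne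
    show slide m a < slide m b ∧ IsGenerator S' (slide m a) ∧ slide m b ∉ S'
    have ham : m ≤ a := Hpos a hgen.1 hgen.2.1
    have hbd : ¬ m ∣ b := fun hd => hga (Hmult b hd)
    have hslb := sl2 m b hbd
    have hbS' : slide m b ∉ S' := by
      intro h
      have h2 := (memS' _).mp h
      rw [us2 m b hm2 (by omega)] at h2
      exact hga h2
    by_cases haem : a = m
    · obtain rfl := haem.symm
      have hsm : slide m m = m := sl1 m m dvd_rfl
      refine ⟨?_, by rw [hsm]; exact hmgenS', hbS'⟩
      rw [hsm]
      have hbm2 : m + 2 ≤ b := by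
        have := hne rfl
        omega
      obtain ⟨q, r, rfl, hr⟩ := decompk m b (by omega)
      have hr0 : r ≠ 0 := fun h => hbd ((dvdk m q r hr).mpr h)
      by_cases h1 : r = 1
      · have hq : 2 ≤ q := by
          by_contra h
          have : q = 0 ∨ q = 1 := by omega
          rcases this with h' | h' <;> subst h' <;> simp at hbm2 <;> omega
        have h2m : 2*m ≤ m*q := by
          calc 2*m = m*2 := by ring
          _ ≤ m*q := Nat.mul_le_mul_left m hq
        have hv : slide m (m*q+r) = m*q+r-2 := by
          rw [slide, if_neg hbd, if_pos (by rw [modk m q r hr]; exact h1)]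
        rw [hv]
        omega
      · have hv : slide m (m*q+r) = m*q+r-1 := by
          rw [slide, if_neg hbd, if_neg (by rw [modk m q r hr]; exact h1)]
        rw [hv]
        omega
    · have hgen' := C1 a b hgen haem hga hab
      refine ⟨?_, hgen', hbS'⟩
      have had : ¬ m ∣ a := hgennd a hgen haem
      have hsla := sl2 m a had
      by_contra hc
      push_neg at hc
      obtain ⟨q, r, rfl, hr⟩ := decompk m b (by omega)
      have hr0 : r ≠ 0 := fun h => hbd ((dvdk m q r hr).mpr h)
      have h1 : r = 1 := by
        by_contra h1
        have hv : slide m (m*q+r) = m*q+r-1 := by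
          rw [slide, if_neg hbd, if_neg (by rw [modk m q r hr]; exact h1)]
        rw [hv] at hc
        omega
      subst h1
      have hv : slide m (m*q+1) = m*q+1-2 := by
        rw [slide, if_neg hbd, if_pos (modk m q 1 (by omega))]
      rw [hv] at hc
      have hba : a = m*q := by omega
      exact had ⟨q, hba⟩
  -- backward map
  have B2 : ∀ p ∈ P', (unslide m p.1, unslide m p.2) ∈ P \ {(m, m+1)} := by
    rintro ⟨a, b⟩ ⟨hab, hgen, hga⟩
    show (unslide m a, unslide m b) ∈ P \ {(m, m+1)}
    have hbd : ¬ m ∣ b := gapnd' b hga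
    have hbu : unslide m b ∉ S := gapS' b hga
    have hb6 := us6 m b hbd
    have hbu3 := (us3 m b).2
    constructor
    · show unslide m a < unslide m b ∧ IsGenerator S (unslide m a) ∧ unslide m b ∉ S
      by_cases haem : a = m
      · obtain rfl := haem.symm
        have hum : unslide m m = m := us5 m m dvd_rfl
        exact ⟨by rw [hum]; omega, by rw [hum]; exact hm, hbu⟩
      · have hgen' := C2 a b hgen haem hga hab
        refine ⟨?_, hgen', hbu⟩
        have had : ¬ m ∣ a := hgennd' a hgen haem
        have ha6 := us6 m a had
        have hau := (us3 m a).2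
        by_contra hc
        push_neg at hc
        obtain ⟨q, r, rfl, hr⟩ := decompk m a (by omega)
        have hr0 : r ≠ 0 := fun h => had ((dvdk m q r hr).mpr h)
        have h1 : r = m - 1 := by
          by_contra h1
          have hua : unslide m (m*q+r) = m*q+r+1 := by
            rw [unslide, if_neg had, modk m q r hr, if_neg h1]
          rw [hua] at hc
          omega
        have hua : unslide m (m*q+r) = m*q+r+2 := by
          rw [unslide, if_neg had, modk m q r hr, if_pos h1]
        rw [hua] at hc
        have hbv : b = m*q + r + 1 := by omega
        apply hbd
        refine ⟨q+1, ?_⟩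
        have : m*(q+1) = m*q + m := by ring
        omega
    · simp only [Set.mem_singleton_iff, Prod.mk.injEq, not_and]
      intro _
      intro hbe
      have ham := HposS' a hgen.1 hgen.2.1
      obtain ⟨q, r, rfl, hr⟩ := decompk m b (by omega)
      have hr0 : r ≠ 0 := fun h => hbd ((dvdk m q r hr).mpr h)
      by_cases h1 : r = m - 1
      · have hub : unslide m (m*q+r) = m*q+r+2 := by
          rw [unslide, if_neg hbd, modk m q r hr, if_pos h1]
        rw [hub] at hbe
        omega
      · have hub : unslide m (m*q+r) = m*q+r+1 := by
          rw [unslide, if_neg hbd, modk m q r hr, if_neg h1]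
        rw [hub] at hbe
        exact hbd ⟨1, by omega⟩
  have B3 : ∀ p ∈ P \ {(m, m+1)},
      (unslide m (slide m (Prod.fst p)), unslide m (slide m (Prod.snd p))) = p := by
    rintro ⟨a, b⟩ ⟨⟨hab, hgen, -⟩, -⟩
    have ham := Hpos a hgen.1 hgen.2.1
    rw [us2 m a hm2 (by omega), us2 m b hm2 (by omega)]
  have B4 : ∀ p : ℕ × ℕ, (slide m (unslide m (Prod.fst p)), slide m (unslide m (Prod.snd p))) = p :=
    fun p => by rw [us1 m _ hm2, us1 m _ hm2]
  have himg : (fun p : ℕ × ℕ => (slide m p.1, slide m p.2)) '' (P \ {(m, m+1)}) = P' := by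
    apply Set.Subset.antisymm
    · rintro _ ⟨p, hp, rfl⟩
      exact B1 p hp
    · intro p hp
      exact ⟨(unslide m p.1, unslide m p.2), B2 p hp, B4 p⟩
  have hinj : Set.InjOn (fun p : ℕ × ℕ => (slide m p.1, slide m p.2)) (P \ {(m, m+1)}) := by
    intro p hp q hq h
    have h1 : slide m p.1 = slide m q.1 := congrArg Prod.fst h
    have h2 : slide m p.2 = slide m q.2 := congrArg Prod.snd h
    rw [← B3 p hp, ← B3 q hq, h1, h2]
  refine ⟨hsec', ?_⟩
  show P'.ncard = P.ncard - 1
  rw [← himg, Set.ncard_image_of_injOn hinj,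
    Set.ncard_diff_singleton_of_mem hmem]
end

section
/- Let S be a secundive numerical semigroup of genus g with smallest generator m. If m + 1 ∈ S, 2m − 2 ∉ S, and 2m − 1 ∉ S, then ew(S) ≥ g − 1. -/
theorem stmt8 (S : Set ℕ) (hS : IsNumericalSemigroup S) (hsec : Secundive S)
    (m : ℕ) (hm : IsGenerator S m) (hmmin : ∀ a, IsGenerator S a → m ≤ a)
    (h1 : m + 1 ∈ S) (h2 : 2 * m - 2 ∉ S) (h3 : 2 * m - 1 ∉ S) :
    genus S - 1 ≤ ew S := by
  classical
  obtain ⟨hmS, hmpos, hmng⟩ := hm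
  -- m is the smallest positive element of S
  have hmin : ∀ x, x ∈ S → 0 < x → m ≤ x := by
    intro x
    induction x using Nat.strong_induction_on with
    | _ x ih =>
      intro hx hxpos
      by_cases hgen : IsGenerator S x
      · exact hmmin x hgen
      · simp only [IsGenerator, not_and, not_not] at hgen
        obtain ⟨y, hy, z, hz, hyp, hzp, hyz⟩ := hgen hx hxpos
        have := ih y (by omega) hy hyp
        omega
  have hm3 : 3 ≤ m := by
    by_contra h
    push_neg at h
    interval_cases m
    · norm_num at h3; exact h3 hmS
    · norm_num at h2; exact h2 hmS
  have hgen1 : IsGenerator S (m + 1) := by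
    refine ⟨h1, by omega, ?_⟩
    rintro ⟨x, hx, y, hy, hxp, hyp, hxy⟩
    have := hmin x hx hxp
    have := hmin y hy hyp
    omega
  have hgap : ∀ f, f ∉ S → f < 2 * m + 1 := by
    intro f hf
    have := hsec f m (m + 1) hf ⟨hmS, hmpos, hmng⟩ hmmin hgen1 (by omega)
      (fun a ha hane => by have := hmmin a ha; omega)
    omega
  have hgen2 : ∀ b, m + b ∈ S → b < m → IsGenerator S (m + b) := by
    intro b hb hbm
    refine ⟨hb, by omega, ?_⟩
    rintro ⟨x, hx, y, hy, hxp, hyp, hxy⟩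
    have := hmin x hx hxp
    have := hmin y hy hyp
    omega
  have h0S : (0 : ℕ) ∈ S := hS.1
  have h1notin : (1 : ℕ) ∉ S := fun h => by have := hmin 1 h one_pos; omega
  have h2mS : 2 * m ∈ S := by have := hS.2.2 m hmS m hmS; simpa [two_mul] using this
  set D : Set ℕ := {n : ℕ | n ∉ S} with hD
  set E : Set (ℕ × ℕ) := {p : ℕ × ℕ | p.1 < p.2 ∧ IsGenerator S p.1 ∧ p.2 ∉ S} with hE
  have hEfin : E.Finite := by
    apply Set.Finite.subset ((Set.finite_Iio (2 * m + 1)).prod (Set.finite_Iio (2 * m + 1)))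
    rintro ⟨a, b⟩ ⟨hab, _, hgb⟩
    have := hgap b hgb
    exact ⟨by simp only [Set.mem_Iio]; omega, by simp only [Set.mem_Iio]; omega⟩
  set F : ℕ → ℕ × ℕ := fun b =>
    if m ≤ b then (m, b) else if m + b ∈ S then (m + b, 2 * m - 1) else (m + 1, m + b)
    with hF
  have hbfacts : ∀ b ∈ D \ {1}, 2 ≤ b := by
    rintro b ⟨hb, hb1⟩
    simp only [Set.mem_singleton_iff] at hb1
    have hb0 : b ≠ 0 := fun h => hb (h ▸ h0S)
    omega
  have hmaps : ∀ b ∈ D \ {1}, F b ∈ E := by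
    rintro b hbm
    have hb2 : 2 ≤ b := hbfacts b hbm
    obtain ⟨hb, -⟩ := hbm
    have hbne : b ≠ m := fun h => hb (h ▸ hmS)
    simp only [hF]
    split_ifs with hc1 hc2
    · exact ⟨by omega, ⟨hmS, hmpos, hmng⟩, hb⟩
    · push_neg at hc1
      have hbm1 : b ≠ m - 1 := by
        intro h
        apply h3
        have : m + b = 2 * m - 1 := by omega
        exact this ▸ hc2
      exact ⟨by omega, hgen2 b hc2 (by omega), by
        have : (2 * m - 1 : ℕ) ∉ S := h3
        exact this⟩
    · push_neg at hc1
      exact ⟨by omega, hgen1, hc2⟩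
  have hinj : Set.InjOn F (D \ {1}) := by
    intro b hbm b' hbm' heq
    have hb2 : 2 ≤ b := hbfacts b hbm
    have hb2' : 2 ≤ b' := hbfacts b' hbm'
    simp only [hF] at heq
    split_ifs at heq with hc1 hc2 hc1' hc2' hc1' hc1' hc2' <;>
      simp only [Prod.mk.injEq] at heq <;> omega
  have hcard : (D \ {1}).ncard ≤ E.ncard :=
    Set.ncard_le_ncard_of_injOn F hmaps hinj hEfin
  have hDfin : D.Finite := hS.2.1
  have h1D : (1 : ℕ) ∈ D := h1notin
  have : (D \ {1}).ncard = D.ncard - 1 := Set.ncard_diff_singleton_of_mem h1D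
  show D.ncard - 1 ≤ E.ncard
  omega
end

section
/- Let S be a secundive numerical semigroup of genus g with smallest generator m, such that m + 1 ∈ S, 2m − 2 ∉ S, and 2m − 1 ∉ S. Then ew(S) = g − 1 if and only if S = {0, m, m+1} ∪ {n ∈ ℕ : n ≥ 2m}. -/
/-- The smallest generator is the smallest positive element. -/
lemma min_pos_elt (S : Set ℕ) (m : ℕ) (hm : IsGenerator S m)
    (hmmin : ∀ a, IsGenerator S a → m ≤ a) :
    ∀ x ∈ S, 0 < x → m ≤ x := by
  classical
  intro x hx hxpos
  by_contra hlt
  push_neg at hlt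
  have hP : ∃ n, n ∈ S ∧ 0 < n ∧ n < m := ⟨x, hx, hxpos, hlt⟩
  set n := Nat.find hP with hn
  obtain ⟨hnS, hnpos, hnm⟩ := Nat.find_spec hP
  have hgen : IsGenerator S n := by
    refine ⟨hnS, hnpos, ?_⟩
    rintro ⟨u, hu, v, hv, hupos, hvpos, huv⟩
    have hun : u < n := by omega
    exact Nat.find_min hP hun ⟨hu, hupos, by omega⟩
  exact absurd (hmmin n hgen) (by omega)

theorem stmt9 (S : Set ℕ) (hS : IsNumericalSemigroup S) (hsec : Secundive S)
    (m : ℕ) (hm : IsGenerator S m) (hmmin : ∀ a, IsGenerator S a → m ≤ a)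
    (h1 : m + 1 ∈ S) (h2 : 2 * m - 2 ∉ S) (h3 : 2 * m - 1 ∉ S) :
    ew S = genus S - 1 ↔ S = {0, m, m + 1} ∪ {n : ℕ | 2 * m ≤ n} := by
  classical
  obtain ⟨h0S, hfin, hadd⟩ := hS
  have hminpos : ∀ x ∈ S, 0 < x → m ≤ x := min_pos_elt S m hm hmmin
  have hmpos : 0 < m := hm.2.1
  have hmS : m ∈ S := hm.1
  -- m ≥ 4
  have hm4 : 4 ≤ m := by
    by_contra hlt
    interval_cases m
    · exact h2 h0S
    · exact h2 (by simpa using hmS)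
    · exact h2 (by simpa using h1)
  -- m+1 is a generator
  have hm1gen : IsGenerator S (m + 1) := by
    refine ⟨h1, by omega, ?_⟩
    rintro ⟨u, hu, v, hv, hupos, hvpos, huv⟩
    have := hminpos u hu hupos
    have := hminpos v hv hvpos
    omega
  -- every gap is < 2m+1
  have hgap_lt : ∀ f ∉ S, f < 2 * m + 1 := by
    intro f hf
    have := hsec f m (m + 1) hf hm hmmin hm1gen (by omega)
      (fun a ha hane => by
        have h1 := hminpos a ha.1 ha.2.1
        omega)
    omega
  have h2mS : 2 * m ∈ S := by have := hadd m hmS m hmS; simpa [two_mul] using this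
  -- everything ≥ 2m is in S
  have hbig : ∀ n, 2 * m ≤ n → n ∈ S := by
    intro n hn
    by_contra hnS
    have := hgap_lt n hnS
    have : n = 2 * m := by omega
    exact hnS (this ▸ h2mS)
  -- elements of S in [m+2, 2m) are generators
  have hgenT : ∀ a ∈ S, m + 2 ≤ a → a < 2 * m → IsGenerator S a := by
    intro a ha hla hua
    refine ⟨ha, by omega, ?_⟩
    rintro ⟨u, hu, v, hv, hupos, hvpos, huv⟩
    have := hminpos u hu hupos
    have := hminpos v hv hvpos
    omega
  constructor
  · -- forward direction, by contradiction
    intro hew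
    by_contra hne
    have hsub : ({0, m, m + 1} ∪ {n : ℕ | 2 * m ≤ n} : Set ℕ) ⊆ S := by
      intro x hx
      rcases hx with hx | hx
      · rcases hx with rfl | rfl | rfl
        · exact h0S
        · exact hmS
        · exact h1
      · exact hbig x hx
    obtain ⟨a, haS, haN⟩ : ∃ a ∈ S, a ∉ ({0, m, m + 1} ∪ {n : ℕ | 2 * m ≤ n} : Set ℕ) := by
      by_contra hc
      push_neg at hc
      exact hne (Set.Subset.antisymm hc hsub)
    simp only [Set.mem_union, Set.mem_insert_iff, Set.mem_singleton_iff, Set.mem_setOf_eq,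
      not_or, not_le] at haN
    obtain ⟨⟨ha0, ham, ham1⟩, ha2m⟩ := haN
    have ham' : m ≤ a := hminpos a haS (by omega)
    have haIco : m + 2 ≤ a ∧ a ≤ 2 * m - 3 := by
      constructor
      · omega
      · -- a ≠ 2m-2, a ≠ 2m-1
        have h2 : a ≠ 2 * m - 2 := fun h => h2 (h ▸ haS)
        have h3 : a ≠ 2 * m - 1 := fun h => h3 (h ▸ haS)
        omega
    set B : Finset ℕ := (Finset.Ico (m + 2) (2 * m)).filter (fun n => n ∉ S) with hB
    set T : Finset ℕ := (Finset.Ico (m + 2) (2 * m)).filter (fun n => n ∈ S) with hT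
    have haT : a ∈ T := by
      simp only [hT, Finset.mem_filter, Finset.mem_Ico]
      exact ⟨⟨haIco.1, by omega⟩, haS⟩
    have hTB : T.card + B.card = m - 2 := by
      have hdisj : Disjoint T B := by
        simp only [Finset.disjoint_left, hT, hB, Finset.mem_filter]
        tauto
      have hun : T ∪ B = Finset.Ico (m + 2) (2 * m) := by
        ext n
        simp only [Finset.mem_union, hT, hB, Finset.mem_filter]
        tauto
      have := Finset.card_union_of_disjoint hdisj
      rw [hun] at this
      rw [← this, Nat.card_Ico]
      omega
    -- genus
    have hgenus : genus S = (m - 1) + B.card := by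
      have hset : {n : ℕ | n ∉ S} = ↑(Finset.Ico 1 m ∪ B) := by
        ext n
        simp only [Set.mem_setOf_eq, Finset.coe_union, Set.mem_union, Finset.coe_filter,
          Finset.mem_coe, Finset.mem_Ico, hB, Set.mem_setOf_eq]
        constructor
        · intro hn
          have hn0 : n ≠ 0 := fun h => hn (h ▸ h0S)
          have hn2m : n < 2 * m := by
            by_contra hc
            exact hn (hbig n (by omega))
          by_cases hnm : n < m
          · left; omega
          · right
            have hnm' : n ≠ m := fun h => hn (h ▸ hmS)
            have hnm1 : n ≠ m + 1 := fun h => hn (h ▸ h1)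
            exact ⟨⟨by omega, hn2m⟩, hn⟩
        · rintro (⟨h1', h2'⟩ | ⟨_, hn⟩)
          · intro hn
            have := hminpos n hn (by omega)
            omega
          · exact hn
      rw [genus, hset, Set.ncard_coe_finset, Finset.card_union_of_disjoint, Nat.card_Ico]
      simp only [Finset.disjoint_left, Finset.mem_Ico, hB, Finset.mem_filter]
      omega
    -- ew lower bound
    set E : Finset (ℕ × ℕ) :=
      (({m, m + 1} : Finset ℕ) ×ˢ B) ∪ (T ×ˢ ({2 * m - 2, 2 * m - 1} : Finset ℕ)) with hE
    have hTprop : ∀ t ∈ T, m + 2 ≤ t ∧ t ≤ 2 * m - 3 ∧ t ∈ S := by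
      intro t ht
      simp only [hT, Finset.mem_filter, Finset.mem_Ico] at ht
      have ht2 : t ≠ 2 * m - 2 := fun h => h2 (h ▸ ht.2)
      have ht3 : t ≠ 2 * m - 1 := fun h => h3 (h ▸ ht.2)
      exact ⟨ht.1.1, by omega, ht.2⟩
    have hEsub : ↑E ⊆ {p : ℕ × ℕ | p.1 < p.2 ∧ IsGenerator S p.1 ∧ p.2 ∉ S} := by
      rintro ⟨p₁, p₂⟩ hp
      simp only [hE, Finset.coe_union, Set.mem_union, Finset.mem_coe, Finset.mem_product,
        Finset.mem_insert, Finset.mem_singleton, hB, Finset.mem_filter, Finset.mem_Ico] at hp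
      rcases hp with ⟨hp1, ⟨hp2a, hp2b⟩⟩ | ⟨hp1, hp2⟩
      · refine ⟨by omega, ?_, hp2b⟩
        rcases hp1 with rfl | rfl
        · exact hm
        · exact hm1gen
      · obtain ⟨hl, hu, hsS⟩ := hTprop p₁ hp1
        refine ⟨by omega, hgenT p₁ hsS hl (by omega), ?_⟩
        rcases hp2 with rfl | rfl
        · exact h2
        · exact h3
    have hewfin : {p : ℕ × ℕ | p.1 < p.2 ∧ IsGenerator S p.1 ∧ p.2 ∉ S}.Finite := by
      apply Set.Finite.subset (Set.finite_Icc ((0:ℕ),(0:ℕ)) (2*m, 2*m))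
      rintro ⟨p₁, p₂⟩ ⟨hlt, _, hgap⟩
      have := hgap_lt p₂ hgap
      simp only [Set.mem_Icc, Prod.mk_le_mk]
      omega
    have hcardE : E.card = 2 * B.card + 2 * T.card := by
      rw [hE, Finset.card_union_of_disjoint, Finset.card_product, Finset.card_product]
      · have h12 : ({m, m + 1} : Finset ℕ).card = 2 := by
          rw [Finset.card_insert_of_notMem (by simp), Finset.card_singleton]
        have h22 : ({2 * m - 2, 2 * m - 1} : Finset ℕ).card = 2 := by
          rw [Finset.card_insert_of_notMem (by simp; omega), Finset.card_singleton]
        rw [h12, h22]; ring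
      · simp only [Finset.disjoint_left, Finset.mem_product, Finset.mem_insert,
          Finset.mem_singleton]
        rintro ⟨p₁, p₂⟩ ⟨hp1, _⟩ ⟨hq1, _⟩
        obtain ⟨hl, _, _⟩ := hTprop p₁ hq1
        omega
    have hle : E.card ≤ ew S := by
      rw [ew, ← Set.ncard_coe_finset]
      exact Set.ncard_le_ncard hEsub hewfin
    have hT1 : 1 ≤ T.card := Finset.card_pos.mpr ⟨a, haT⟩
    rw [hew, hgenus] at hle
    omega
  · -- backward direction
    intro hSeq
    subst hSeq
    have hmem : ∀ n : ℕ, n ∈ ({0, m, m + 1} ∪ {n : ℕ | 2 * m ≤ n} : Set ℕ) ↔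
        (n = 0 ∨ n = m ∨ n = m + 1 ∨ 2 * m ≤ n) := by
      intro n
      simp [Set.mem_union, Set.mem_insert_iff, Set.mem_setOf_eq, or_assoc]
    have hgenus : genus ({0, m, m + 1} ∪ {n : ℕ | 2 * m ≤ n} : Set ℕ) = 2 * m - 3 := by
      have hset : {n : ℕ | n ∉ ({0, m, m + 1} ∪ {n : ℕ | 2 * m ≤ n} : Set ℕ)} =
          ↑(Finset.Ico 1 m ∪ Finset.Ico (m + 2) (2 * m)) := by
        ext n
        simp only [Set.mem_setOf_eq, hmem, Finset.coe_union, Set.mem_union, Finset.mem_coe,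
          Finset.mem_Ico, not_or, not_le]
        omega
      rw [genus, hset, Set.ncard_coe_finset, Finset.card_union_of_disjoint, Nat.card_Ico,
        Nat.card_Ico]
      · omega
      · simp only [Finset.disjoint_left, Finset.mem_Ico]
        omega
    have hewset : {p : ℕ × ℕ | p.1 < p.2 ∧
        IsGenerator ({0, m, m + 1} ∪ {n : ℕ | 2 * m ≤ n} : Set ℕ) p.1 ∧
        p.2 ∉ ({0, m, m + 1} ∪ {n : ℕ | 2 * m ≤ n} : Set ℕ)} =
        ↑((({m, m + 1} : Finset ℕ) ×ˢ Finset.Ico (m + 2) (2 * m))) := by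
      ext ⟨p₁, p₂⟩
      simp only [Set.mem_setOf_eq, Finset.coe_product, Set.mem_prod, Finset.mem_coe,
        Finset.mem_insert, Finset.mem_singleton, Finset.mem_Ico]
      constructor
      · rintro ⟨hlt, ⟨hp1S, hp1pos, _⟩, hp2⟩
        rw [hmem] at hp1S
        rw [hmem] at hp2
        push_neg at hp2
        constructor
        · -- p₁ ∈ {m, m+1}
          rcases hp1S with rfl | rfl | rfl | hge
          · omega
          · left; rfl
          · right; rfl
          · omega
        · rcases hp1S with rfl | rfl | rfl | hge <;> omega
      · rintro ⟨hp1, hp2⟩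
        have hp1pos : 0 < p₁ := by rcases hp1 with rfl | rfl <;> omega
        have hp1mem : p₁ ∈ ({0, m, m + 1} ∪ {n : ℕ | 2 * m ≤ n} : Set ℕ) := by
          rw [hmem]; rcases hp1 with rfl | rfl <;> simp
        refine ⟨by omega, ⟨hp1mem, hp1pos, ?_⟩, ?_⟩
        · rintro ⟨u, hu, v, hv, hupos, hvpos, huv⟩
          rw [hmem] at hu hv
          rcases hp1 with rfl | rfl <;> omega
        · rw [hmem]; push_neg; omega
    rw [ew, hewset, hgenus, Set.ncard_coe_finset, Finset.card_product, Nat.card_Ico,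
      Finset.card_insert_of_notMem (by simp), Finset.card_singleton]
    omega
end

section
/- For m ≥ 4, the set S = {0, m, m+1} ∪ {n ∈ ℕ : n ≥ 2m} is a numerical semigroup of genus 2m − 3 with effective weight 2m − 4. -/
theorem stmt10 (m : ℕ) (hm : 4 ≤ m) :
    IsNumericalSemigroup ({0, m, m + 1} ∪ {n : ℕ | 2 * m ≤ n}) ∧
    genus ({0, m, m + 1} ∪ {n : ℕ | 2 * m ≤ n}) = 2 * m - 3 ∧
    ew ({0, m, m + 1} ∪ {n : ℕ | 2 * m ≤ n}) = 2 * m - 4 := by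
  have hmem : ∀ n : ℕ, n ∈ ({0, m, m + 1} ∪ {n : ℕ | 2 * m ≤ n} : Set ℕ) ↔
      (n = 0 ∨ n = m ∨ n = m + 1 ∨ 2 * m ≤ n) := by
    intro n; simp only [Set.mem_union, Set.mem_insert_iff, Set.mem_singleton_iff, Set.mem_setOf_eq]; tauto
  refine ⟨⟨by simp [hmem], ?_, ?_⟩, ?_, ?_⟩
  · apply Set.Finite.subset (Set.finite_Iio (2 * m))
    intro n hn
    simp only [Set.mem_setOf_eq, hmem] at hn
    simp only [Set.mem_Iio]; omega
  · intro a ha b hb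
    rw [hmem] at ha hb ⊢
    omega
  · have hgaps : {n : ℕ | n ∉ ({0, m, m + 1} ∪ {n : ℕ | 2 * m ≤ n} : Set ℕ)} =
        ↑(Finset.Ioo 0 m ∪ Finset.Ioo (m + 1) (2 * m)) := by
      ext n
      simp only [Set.mem_setOf_eq, hmem, Finset.coe_union, Set.mem_union, Finset.coe_Ioo,
        Set.mem_Ioo]
      omega
    rw [genus, hgaps, Set.ncard_coe_finset, Finset.card_union_of_disjoint]
    · rw [Nat.card_Ioo, Nat.card_Ioo]; omega
    · rw [Finset.disjoint_left]
      intro x hx hx'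
      simp only [Finset.mem_Ioo] at hx hx'
      omega
  · have hgen : ∀ a ∈ ({m, m + 1} : Finset ℕ),
        IsGenerator ({0, m, m + 1} ∪ {n : ℕ | 2 * m ≤ n}) a := by
      intro a ha
      simp only [Finset.mem_insert, Finset.mem_singleton] at ha
      refine ⟨by rw [hmem]; omega, by omega, ?_⟩
      rintro ⟨x, hx, y, hy, hx0, hy0, hxy⟩
      rw [hmem] at hx hy
      omega
    have hset : {p : ℕ × ℕ | p.1 < p.2 ∧ IsGenerator ({0, m, m + 1} ∪ {n : ℕ | 2 * m ≤ n}) p.1 ∧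
        p.2 ∉ ({0, m, m + 1} ∪ {n : ℕ | 2 * m ≤ n} : Set ℕ)} =
        ↑(({m, m + 1} : Finset ℕ) ×ˢ Finset.Ioo (m + 1) (2 * m)) := by
      ext ⟨a, b⟩
      simp only [Set.mem_setOf_eq, Finset.coe_product, Set.mem_prod, Finset.coe_insert,
        Finset.coe_singleton, Set.mem_insert_iff, Set.mem_singleton_iff, Finset.coe_Ioo,
        Set.mem_Ioo]
      constructor
      · rintro ⟨hab, ⟨haS, ha0, -⟩, hb⟩
        rw [hmem] at haS
        rw [hmem] at hb
        push_neg at hb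
        omega
      · rintro ⟨ha, hb1, hb2⟩
        have hg := hgen a (by simp [ha])
        refine ⟨by omega, hg, ?_⟩
        rw [hmem]; omega
    rw [ew, hset, Set.ncard_coe_finset, Finset.card_product, Nat.card_Ioo,
      Finset.card_insert_of_notMem (by simp), Finset.card_singleton]
    omega
end

section
/- Let g ≥ 6 and let η be an integer with −2 ≤ η ≤ 2 and η ≡ g + 1 (mod 4). Set c = (3g + 3 + η)/4 and d = (5g + 1 + 3η)/4. Then the numerical semigroup S generated by {c, c+1, …, d} equals ℕ \ ({1, …, c−1} ∪ {d+1, …, 2c−1}), and S has genus g. -/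
lemma aux_mem_closure (c d : ℕ) (hc0 : 0 < c) (hcd : c ≤ d) (h3 : 3 * c ≤ 2 * d + 1) :
    ∀ n, 2 * c ≤ n → n ∈ AddSubmonoid.closure (Set.Icc c d) := by
  intro n
  induction n using Nat.strong_induction_on with
  | _ n ih =>
    intro hn
    by_cases h1 : n ≤ c + d
    · have h : n = c + (n - c) := by omega
      rw [h]
      exact add_mem (AddSubmonoid.subset_closure ⟨le_refl c, hcd⟩)
        (AddSubmonoid.subset_closure ⟨by omega, by omega⟩)
    · by_cases h2 : n ≤ 2 * d
      · have h : n = d + (n - d) := by omega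
        rw [h]
        exact add_mem (AddSubmonoid.subset_closure ⟨hcd, le_refl d⟩)
          (AddSubmonoid.subset_closure ⟨by omega, by omega⟩)
      · have h : n = c + (n - c) := by omega
        rw [h]
        exact add_mem (AddSubmonoid.subset_closure ⟨le_refl c, hcd⟩)
          (ih (n - c) (by omega) (by omega))

theorem stmt11 (g : ℕ) (hg : 6 ≤ g) (η : ℤ) (hη1 : -2 ≤ η) (hη2 : η ≤ 2)
    (hmod : (4 : ℤ) ∣ η - ((g : ℤ) + 1)) (c d : ℕ)
    (hc : (c : ℤ) * 4 = 3 * g + 3 + η) (hd : (d : ℤ) * 4 = 5 * g + 1 + 3 * η) :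
    (AddSubmonoid.closure (Set.Icc c d) : Set ℕ) =
      {n : ℕ | n ∉ Set.Icc 1 (c - 1) ∪ Set.Icc (d + 1) (2 * c - 1)} ∧
    genus {n : ℕ | n ∉ Set.Icc 1 (c - 1) ∪ Set.Icc (d + 1) (2 * c - 1)} = g := by
  have h2c : 2 ≤ c := by omega
  have hcd : c ≤ d := by omega
  have hd2c : d + 2 ≤ 2 * c := by omega
  have h3 : 3 * c ≤ 2 * d + 1 := by omega
  have hgen : 3 * c = g + 2 + d := by omega
  set U : Set ℕ := Set.Icc 1 (c - 1) ∪ Set.Icc (d + 1) (2 * c - 1) with hU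
  have hmemU : ∀ n : ℕ, n ∉ U ↔ (n = 0 ∨ (c ≤ n ∧ n ≤ d) ∨ 2 * c ≤ n) := by
    intro n
    simp only [hU, Set.mem_union, Set.mem_Icc, not_or, not_and_or, not_le]
    omega
  have hseteq : (AddSubmonoid.closure (Set.Icc c d) : Set ℕ) = {n : ℕ | n ∉ U} := by
    apply Set.Subset.antisymm
    · have : AddSubmonoid.closure (Set.Icc c d) ≤
        { carrier := {n : ℕ | n ∉ U},
          zero_mem' := (hmemU 0).mpr (Or.inl rfl),
          add_mem' := by
            intro a b ha hb
            have ha' := (hmemU a).mp ha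
            have hb' := (hmemU b).mp hb
            exact (hmemU (a + b)).mpr (by omega) } := by
        apply AddSubmonoid.closure_le.mpr
        intro x hx
        simp only [Set.mem_Icc] at hx
        exact (hmemU x).mpr (by omega)
      exact this
    · intro n hn
      simp only [Set.mem_setOf_eq] at hn
      rw [hmemU] at hn
      rcases hn with h0 | hmid | hbig
      · subst h0; exact zero_mem _
      · exact AddSubmonoid.subset_closure ⟨hmid.1, hmid.2⟩
      · exact aux_mem_closure c d (by omega) hcd h3 n hbig
  constructor
  · exact hseteq
  · unfold genus
    have hcompl : {n : ℕ | n ∉ {n : ℕ | n ∉ U}} = U := by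
      ext n; simp
    rw [hcompl, hU]
    rw [← Finset.coe_Icc, ← Finset.coe_Icc, ← Finset.coe_union, Set.ncard_coe_finset]
    rw [Finset.card_union_of_disjoint]
    · rw [Nat.card_Icc, Nat.card_Icc]
      omega
    · rw [Finset.disjoint_left]
      intro a ha hb
      simp only [Finset.mem_Icc] at ha hb
      omega
end

section
/- Let g ≥ 6 and let η be an integer with −2 ≤ η ≤ 2 and η ≡ g + 1 (mod 4). Set c = (3g + 3 + η)/4 and d = (5g + 1 + 3η)/4, and let S = ℕ \ ({1, …, c−1} ∪ {d+1, …, 2c−1}). Then the effective weight of S equals (g+1)²/8 − η²/8 = ⌊(g+1)²/8⌋. -/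
theorem stmt12 (g : ℕ) (hg : 6 ≤ g) (η : ℤ) (hη1 : -2 ≤ η) (hη2 : η ≤ 2)
    (hmod : (4 : ℤ) ∣ η - ((g : ℤ) + 1)) (c d : ℕ)
    (hc : (c : ℤ) * 4 = 3 * g + 3 + η) (hd : (d : ℤ) * 4 = 5 * g + 1 + 3 * η) :
    8 * (ew {n : ℕ | n ∉ Set.Icc 1 (c - 1) ∪ Set.Icc (d + 1) (2 * c - 1)} : ℤ) =
        ((g : ℤ) + 1) ^ 2 - η ^ 2 ∧
    ew {n : ℕ | n ∉ Set.Icc 1 (c - 1) ∪ Set.Icc (d + 1) (2 * c - 1)} = (g + 1) ^ 2 / 8 := by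
  set S : Set ℕ := {n : ℕ | n ∉ Set.Icc 1 (c - 1) ∪ Set.Icc (d + 1) (2 * c - 1)} with hS
  -- basic numeric facts
  have hc5 : 5 ≤ c := by omega
  have hdc : c + 2 ≤ d := by omega
  have h2cd : d + 3 ≤ 2 * c := by omega
  have h3c : 3 * c ≤ 2 * d + 1 := by omega
  -- membership characterization
  have hmem : ∀ n : ℕ, n ∈ S ↔ (n = 0 ∨ (c ≤ n ∧ n ≤ d) ∨ 2 * c ≤ n) := by
    intro n
    simp only [hS, Set.mem_setOf_eq, Set.mem_union, Set.mem_Icc]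
    omega
  -- generator characterization
  have hgen : ∀ a : ℕ, IsGenerator S a ↔ (c ≤ a ∧ a ≤ d) := by
    intro a
    constructor
    · rintro ⟨haS, hapos, hno⟩
      rw [hmem] at haS
      rcases haS with rfl | h | h2c
      · omega
      · exact h
      · exfalso
        apply hno
        by_cases hle : a ≤ 2 * d
        · refine ⟨max c (a - d), ?_, a - max c (a - d), ?_, ?_, ?_, ?_⟩
          · rw [hmem]; omega
          · rw [hmem]; omega
          · omega
          · omega
          · omega
        · refine ⟨c, ?_, a - c, ?_, ?_, ?_, ?_⟩
          · rw [hmem]; omega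
          · rw [hmem]; omega
          · omega
          · omega
          · omega
    · rintro ⟨h1, h2⟩
      refine ⟨by rw [hmem]; omega, by omega, ?_⟩
      rintro ⟨x, hx, y, hy, hxpos, hypos, hxy⟩
      rw [hmem] at hx hy
      omega
  -- the pair set is a product of intervals
  have hset : {p : ℕ × ℕ | p.1 < p.2 ∧ IsGenerator S p.1 ∧ p.2 ∉ S} =
      ↑(Finset.Icc c d ×ˢ Finset.Icc (d + 1) (2 * c - 1)) := by
    ext ⟨a, b⟩
    simp only [Set.mem_setOf_eq, Finset.coe_product, Set.mem_prod, Finset.coe_Icc,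
      Set.mem_Icc, hgen, hmem]
    omega
  have hew : ew S = (d + 1 - c) * (2 * c - 1 - d) := by
    rw [ew, hset, Set.ncard_coe_finset, Finset.card_product, Nat.card_Icc, Nat.card_Icc]
    congr 1
    omega
  have hA : ((d : ℤ) + 1 - c) * 2 = (g : ℤ) + 1 + η := by omega
  have hB : ((2 * c : ℤ) - 1 - d) * 4 = (g : ℤ) + 1 - η := by omega
  have h1 : ((d + 1 - c : ℕ) : ℤ) = (d : ℤ) + 1 - c := by omega
  have h2 : ((2 * c - 1 - d : ℕ) : ℤ) = (2 * c : ℤ) - 1 - d := by omega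
  have hcast : ((ew S : ℤ)) = ((d : ℤ) + 1 - c) * ((2 * c : ℤ) - 1 - d) := by
    rw [hew, Nat.cast_mul, h1, h2]
  have key : 8 * (ew S : ℤ) = ((g : ℤ) + 1) ^ 2 - η ^ 2 := by
    calc 8 * (ew S : ℤ) = (((d : ℤ) + 1 - c) * 2) * (((2 * c : ℤ) - 1 - d) * 4) := by
          rw [hcast]; ring
      _ = ((g : ℤ) + 1 + η) * ((g : ℤ) + 1 - η) := by rw [hA, hB]
      _ = ((g : ℤ) + 1) ^ 2 - η ^ 2 := by ring
  refine ⟨key, ?_⟩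
  have he2 : η ^ 2 = (η.natAbs : ℤ) ^ 2 := by
    rw [sq, sq]; exact_mod_cast (Int.natAbs_mul_self (a := η)).symm
  have hea : η.natAbs ≤ 2 := by omega
  have hsq : η.natAbs ^ 2 ≤ 4 :=
    le_trans (Nat.pow_le_pow_left hea 2) (by norm_num)
  have keyN : (g + 1) ^ 2 = 8 * ew S + η.natAbs ^ 2 := by
    have : ((g : ℤ) + 1) ^ 2 = 8 * (ew S : ℤ) + (η.natAbs : ℤ) ^ 2 := by
      rw [key, he2]; ring
    exact_mod_cast this
  omega
end

section
/- Let g ≥ 1 and 1 ≤ e ≤ g − 1, and define NGS²_{g,e} = {0, g, g+1, …, g+e−1} ∪ {n : n ≥ g+e+1}. Then NGS²_{g,e} is a numerical semigroup of genus g and its effective weight equals e. -/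
theorem stmt13 (g e : ℕ) (hg : 1 ≤ g) (he1 : 1 ≤ e) (he2 : e ≤ g - 1) :
    IsNumericalSemigroup ({0} ∪ Set.Icc g (g + e - 1) ∪ {n : ℕ | g + e + 1 ≤ n}) ∧
    genus ({0} ∪ Set.Icc g (g + e - 1) ∪ {n : ℕ | g + e + 1 ≤ n}) = g ∧
    ew ({0} ∪ Set.Icc g (g + e - 1) ∪ {n : ℕ | g + e + 1 ≤ n}) = e := by
  have hg2 : 2 ≤ g := by omega
  set S : Set ℕ := {0} ∪ Set.Icc g (g + e - 1) ∪ {n : ℕ | g + e + 1 ≤ n} with hS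
  have hmem : ∀ n, n ∈ S ↔ (n = 0 ∨ (g ≤ n ∧ n ≤ g + e - 1) ∨ g + e + 1 ≤ n) := by
    intro n
    simp [hS, Set.mem_Icc]; omega
  have hgapset : {n : ℕ | n ∉ S} = Set.Icc 1 (g - 1) ∪ {g + e} := by
    ext n
    simp only [Set.mem_setOf_eq, hmem, Set.mem_union, Set.mem_Icc, Set.mem_singleton_iff]
    omega
  refine ⟨⟨?_, ?_, ?_⟩, ?_, ?_⟩
  · rw [hmem]; left; rfl
  · rw [hgapset]; exact (Set.finite_Icc _ _).union (Set.finite_singleton _)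
  · intro a ha b hb
    rw [hmem] at ha hb ⊢
    omega
  · rw [genus, hgapset, Set.ncard_union_eq ?_ (Set.finite_Icc _ _) (Set.finite_singleton _)]
    · rw [Set.ncard_singleton, ← Finset.coe_Icc, Set.ncard_coe_finset, Nat.card_Icc]
      omega
    · rw [Set.disjoint_singleton_right, Set.mem_Icc]
      omega
  · have hP : {p : ℕ × ℕ | p.1 < p.2 ∧ IsGenerator S p.1 ∧ p.2 ∉ S} =
        (fun a => (a, g + e)) '' Set.Icc g (g + e - 1) := by
      ext ⟨a, b⟩
      simp only [Set.mem_setOf_eq, Set.mem_image, Set.mem_Icc, Prod.mk.injEq]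
      constructor
      · rintro ⟨hab, ⟨haS, hapos, -⟩, hbS⟩
        rw [hmem] at haS
        have hb' : (1 ≤ b ∧ b ≤ g - 1) ∨ b = g + e := by
          have : b ∈ {n : ℕ | n ∉ S} := hbS
          rw [hgapset] at this
          rw [Set.mem_union, Set.mem_Icc, Set.mem_singleton_iff] at this; exact this
        exact ⟨a, ⟨by omega, by omega⟩, rfl, by omega⟩
      · rintro ⟨a', ⟨h1, h2⟩, rfl, rfl⟩
        refine ⟨by omega, ⟨?_, by omega, ?_⟩, ?_⟩
        · rw [hmem]; omega
        · rintro ⟨x, hx, y, hy, hxp, hyp, hsum⟩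
          rw [hmem] at hx hy
          omega
        · rw [hmem]; omega
    rw [ew, hP, Set.ncard_image_of_injective _ (fun x y h => (Prod.mk.injEq _ _ _ _ ▸ h).1),
      ← Finset.coe_Icc, Set.ncard_coe_finset, Nat.card_Icc]
    omega
end

section
/- Let S be a numerical semigroup of genus g satisfying ew(S) = g − λ(S), assume S is non-ordinary, and let m < n be its two smallest generators. If n = m + 1, then there is at most one gap of S greater than m; consequently S is either the ordinary semigroup or equals {0, g, g+1, …, g+e−1} ∪ {n : n ≥ g+e+1} for some 1 ≤ e ≤ g−1. -/
theorem stmt15 (S : Set ℕ) (hS : IsNumericalSemigroup S)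
    (heq : ew S + lambdaS S = genus S)
    (hord : S ≠ {x : ℕ | x = 0 ∨ genus S + 1 ≤ x})
    (m n : ℕ)
    (hm : IsGenerator S m) (hmmin : ∀ a, IsGenerator S a → m ≤ a)
    (hn : IsGenerator S n) (hnm : m < n) (hnmin : ∀ a, IsGenerator S a → a ≠ m → n ≤ a)
    (hval : n = m + 1) :
    {b : ℕ | b ∉ S ∧ m < b}.ncard ≤ 1 ∧
    (S = {x : ℕ | x = 0 ∨ genus S + 1 ≤ x} ∨
      ∃ e : ℕ, 1 ≤ e ∧ e ≤ genus S - 1 ∧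
        S = {0} ∪ Set.Icc (genus S) (genus S + e - 1) ∪ {x : ℕ | genus S + e + 1 ≤ x}) := by
  classical
  obtain ⟨h0, hGfin, hclosed⟩ := hS
  have hmS : m ∈ S := hm.1
  have hmpos : 0 < m := hm.2.1
  have hn1 : IsGenerator S (m + 1) := hval ▸ hn
  have hnS : (m + 1) ∈ S := hn1.1
  -- m is the minimal positive element of S
  have hmult : ∀ x ∈ S, 0 < x → m ≤ x := by
    intro x hx hxpos
    by_contra h
    push_neg at h
    have hex : ∃ k, k ∈ S ∧ 0 < k := ⟨x, hx, hxpos⟩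
    have hk := Nat.find_spec hex
    have hkgen : IsGenerator S (Nat.find hex) := by
      refine ⟨hk.1, hk.2, ?_⟩
      rintro ⟨u, hu, v, hv, hupos, hvpos, huv⟩
      have hle : Nat.find hex ≤ u := Nat.find_le ⟨hu, hupos⟩
      omega
    have h1 := hmmin _ hkgen
    have h2 : Nat.find hex ≤ x := Nat.find_le ⟨hx, hxpos⟩
    omega
  -- the sets
  set G : Set ℕ := {x : ℕ | x ∉ S} with hGdef
  set Lset : Set ℕ := {b : ℕ | b ∉ S ∧ ∀ a ∈ S, 0 < a → b + a ∈ S} with hLdef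
  set E : Set (ℕ × ℕ) := {p : ℕ × ℕ | p.1 < p.2 ∧ IsGenerator S p.1 ∧ p.2 ∉ S} with hEdef
  have hLsub : Lset ⊆ G := fun b hb => hb.1
  have hLfin : Lset.Finite := hGfin.subset hLsub
  have hEfin : E.Finite := by
    obtain ⟨N, hN⟩ := hGfin.bddAbove
    refine ((Set.finite_Iio (N + 1)).prod (Set.finite_Iio (N + 1))).subset ?_
    rintro ⟨a, b⟩ ⟨hab, _, hb⟩
    have : b ≤ N := hN hb
    exact ⟨by simpa using by omega, by simpa using by omega⟩
  set NL : Set ℕ := G \ Lset with hNLdef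
  have hNLcard : NL.ncard = ew S := by
    have h1 : NL.ncard = G.ncard - Lset.ncard := Set.ncard_diff hLsub hLfin
    have h2 : Lset.ncard ≤ G.ncard := Set.ncard_le_ncard hLsub hGfin
    have h3 : G.ncard = genus S := rfl
    have h4 : Lset.ncard = lambdaS S := rfl
    omega
  have hEcard : E.ncard = ew S := rfl
  -- the difference map
  have hmaps : ∀ p ∈ E, p.2 - p.1 ∈ NL := by
    rintro ⟨a, b⟩ ⟨hab, hagen, hb⟩
    have hd : b - a + a = b := by omega
    constructor
    · intro hmem
      exact hb (hd ▸ hclosed _ hmem _ hagen.1)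
    · rintro ⟨-, hall⟩
      exact hb (hd ▸ hall a hagen.1 hagen.2.1)
  have hsurj : ∀ c ∈ NL, ∃ p ∈ E, p.2 - p.1 = c := by
    intro c hc
    obtain ⟨hcg, hcl⟩ := hc
    have hcg' : c ∉ S := hcg
    have hex : ∃ a, a ∈ S ∧ 0 < a ∧ c + a ∉ S := by
      by_contra hno
      push_neg at hno
      exact hcl ⟨hcg', fun a ha hapos => hno a ha hapos⟩
    set a := Nat.find hex with hadef
    have ha := Nat.find_spec hex
    have hagen : IsGenerator S a := by
      refine ⟨ha.1, ha.2.1, ?_⟩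
      rintro ⟨u, hu, v, hv, hupos, hvpos, huv⟩
      have hcu : c + u ∉ S := by
        intro hmem
        have : c + u + v ∈ S := hclosed _ hmem _ hv
        have : c + a ∈ S := by rwa [show c + u + v = c + a by omega] at this
        exact ha.2.2 this
      have : a ≤ u := Nat.find_le ⟨hu, hupos, hcu⟩
      omega
    have hcpos : 0 < c := by
      rcases Nat.eq_zero_or_pos c with h | h
      · exact absurd (h ▸ h0) hcg'
      · exact h
    exact ⟨(a, c + a), ⟨by omega, hagen, ha.2.2⟩, by omega⟩
  -- injectivity of the difference map
  have hinj : ∀ p ∈ E, ∀ q ∈ E, p.2 - p.1 = q.2 - q.1 → p = q := by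
    intro p hp q hq hpq
    exact Set.inj_on_of_surj_on_of_ncard_le (fun p _ => p.2 - p.1)
      hmaps (fun b hb => by obtain ⟨p, hp, h⟩ := hsurj b hb; exact ⟨p, hp, h⟩)
      (by omega) hp hq hpq hEfin
  -- no two consecutive gaps above m
  have hnocons : ∀ b, m < b → b ∉ S → b + 1 ∉ S → False := by
    intro b hb hb1 hb2
    have hp : ((m, b) : ℕ × ℕ) ∈ E := ⟨hb, hm, hb1⟩
    have hq : ((m + 1, b + 1) : ℕ × ℕ) ∈ E := ⟨by omega, hn1, hb2⟩
    have := hinj _ hp _ hq (by simp)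
    simp [Prod.ext_iff] at this
  -- bounds on gaps above m
  have hBbd : ∀ b, m < b → b ∉ S → m + 2 ≤ b ∧ b ≤ 2 * m - 1 := by
    intro b hb hbS
    have hbne : b ≠ m + 1 := fun h => hbS (h ▸ hnS)
    have hb2 : m + 2 ≤ b := by omega
    have hg1 : b - m ∉ S := by
      intro hmem
      exact hbS (by have := hclosed _ hmem _ hmS; rwa [show b - m + m = b by omega] at this)
    have hg2 : b - m - 1 ∉ S := by
      intro hmem
      exact hbS (by have := hclosed _ hmem _ hnS; rwa [show b - m - 1 + (m + 1) = b by omega] at this)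
    have hle : b - m - 1 ≤ m := by
      by_contra h
      exact hnocons (b - m - 1) (by omega) hg2 (by rwa [show b - m - 1 + 1 = b - m by omega])
    have hne1 : b - m ≠ m := fun h => hg1 (by rw [h]; exact hmS)
    have hne2 : b - m ≠ m + 1 := fun h => hg1 (by rw [h]; exact hnS)
    omega
  -- every element of S in [m+2, 2m-1] is a generator
  have hgen2 : ∀ x ∈ S, m + 2 ≤ x → x ≤ 2 * m - 1 → IsGenerator S x := by
    intro x hx h1 h2
    refine ⟨hx, by omega, ?_⟩
    rintro ⟨u, hu, v, hv, hupos, hvpos, huv⟩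
    have := hmult u hu hupos
    have := hmult v hv hvpos
    omega
  -- at most one gap above m
  have hB1 : ∀ b1 b2, m < b1 → b1 ∉ S → m < b2 → b2 ∉ S → b1 < b2 → False := by
    intro b1 b2 hmb1 hb1 hmb2 hb2 h12
    obtain ⟨hb1lo, hb1hi⟩ := hBbd b1 hmb1 hb1
    obtain ⟨hb2lo, hb2hi⟩ := hBbd b2 hmb2 hb2
    have hsep : b1 + 2 ≤ b2 := by
      rcases Nat.lt_or_ge (b1 + 1) b2 with h | h
      · omega
      · exact absurd (hnocons b1 hmb1 hb1 (by rwa [show b1 + 1 = b2 by omega])) id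
    set s2 := b2 - b1 + m with hs2def
    have hs2 : s2 ∉ S := by
      intro hmem
      have hgen : IsGenerator S s2 := hgen2 s2 hmem (by omega) (by omega)
      have hp : ((m, b1) : ℕ × ℕ) ∈ E := ⟨hmb1, hm, hb1⟩
      have hq : ((s2, b2) : ℕ × ℕ) ∈ E := ⟨by omega, hgen, hb2⟩
      have := hinj _ hp _ hq (by simp; omega)
      simp [Prod.ext_iff] at this
      omega
    have hs21 : s2 + 1 ∉ S := by
      intro hmem
      have hgen : IsGenerator S (s2 + 1) := hgen2 (s2 + 1) hmem (by omega) (by omega)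
      have hp : ((m + 1, b1) : ℕ × ℕ) ∈ E := ⟨by omega, hn1, hb1⟩
      have hq : ((s2 + 1, b2) : ℕ × ℕ) ∈ E := ⟨by omega, hgen, hb2⟩
      have := hinj _ hp _ hq (by simp; omega)
      simp [Prod.ext_iff] at this
      omega
    exact hnocons s2 (by omega) hs2 hs21
  -- the set of gaps above m is a subsingleton
  have hss : ({b : ℕ | b ∉ S ∧ m < b}).Subsingleton := by
    intro x hx y hy
    by_contra hne
    rcases Nat.lt_or_ge x y with h | h
    · exact hB1 x y hx.2 hx.1 hy.2 hy.1 h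
    · exact hB1 y x hy.2 hy.1 hx.2 hx.1 (by omega)
  rcases hss.eq_empty_or_singleton with hBe | ⟨b, hBb⟩
  · refine ⟨by simp [hBe], Or.inl ?_⟩
    have hG : G = Set.Icc 1 (m - 1) := by
      ext x
      simp only [hGdef, Set.mem_setOf_eq, Set.mem_Icc]
      constructor
      · intro hx
        have hx0 : x ≠ 0 := fun h => hx (h ▸ h0)
        have hxm : x ≠ m := fun h => hx (h ▸ hmS)
        have hxle : ¬ m < x := fun h => by
          have : x ∈ ({b : ℕ | b ∉ S ∧ m < b}) := ⟨hx, h⟩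
          simp [hBe] at this
        omega
      · rintro ⟨h1, h2⟩ hx
        have := hmult x hx (by omega)
        omega
    have hgv : genus S = m - 1 := by
      show G.ncard = m - 1
      rw [hG, ← Finset.coe_Icc, Set.ncard_coe_finset, Nat.card_Icc]
      omega
    rw [hgv]
    ext x
    simp only [Set.mem_setOf_eq]
    constructor
    · intro hx
      rcases Nat.eq_zero_or_pos x with h | h
      · exact Or.inl h
      · exact Or.inr (by have := hmult x hx h; omega)
    · rintro (h | h)
      · exact h ▸ h0
      · by_contra hx
        have : x ∈ G := hx
        rw [hG] at this
        simp at this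
        omega
  · obtain ⟨hbS, hmb⟩ : b ∉ S ∧ m < b := by
      have : b ∈ ({b : ℕ | b ∉ S ∧ m < b}) := by rw [hBb]; rfl
      exact this
    obtain ⟨hblo, hbhi⟩ := hBbd b hmb hbS
    have hG : G = insert b (Set.Icc 1 (m - 1)) := by
      ext x
      simp only [hGdef, Set.mem_setOf_eq, Set.mem_insert_iff, Set.mem_Icc]
      constructor
      · intro hx
        have hx0 : x ≠ 0 := fun h => hx (h ▸ h0)
        have hxm : x ≠ m := fun h => hx (h ▸ hmS)
        rcases Nat.lt_or_ge m x with h | h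
        · have : x ∈ ({b : ℕ | b ∉ S ∧ m < b}) := ⟨hx, h⟩
          rw [hBb] at this
          exact Or.inl this
        · exact Or.inr ⟨by omega, by omega⟩
      · rintro (h | ⟨h1, h2⟩)
        · exact h ▸ hbS
        · intro hx
          have := hmult x hx (by omega)
          omega
    have hgv : genus S = m := by
      show G.ncard = m
      rw [hG, Set.ncard_insert_of_notMem (by simp; omega)
        ((Set.finite_Icc 1 (m - 1)))]
      rw [← Finset.coe_Icc, Set.ncard_coe_finset, Nat.card_Icc]
      omega
    refine ⟨by simp [hBb], Or.inr ⟨b - m, by omega, by rw [hgv]; omega, ?_⟩⟩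
    rw [hgv]
    ext x
    simp only [Set.mem_union, Set.mem_singleton_iff, Set.mem_Icc, Set.mem_setOf_eq]
    constructor
    · intro hx
      rcases Nat.eq_zero_or_pos x with h | h
      · exact Or.inl (Or.inl h)
      · have hxm := hmult x hx h
        have hxb : x ≠ b := fun hh => hbS (hh ▸ hx)
        rcases Nat.lt_or_ge x b with h2 | h2
        · exact Or.inl (Or.inr ⟨hxm, by omega⟩)
        · exact Or.inr (by omega)
    · rintro ((h | ⟨h1, h2⟩) | h)
      · exact h ▸ h0
      · by_contra hx
        have : x ∈ G := hx
        rw [hG] at this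
        simp at this
        omega
      · by_contra hx
        have : x ∈ G := hx
        rw [hG] at this
        simp at this
        omega
end

section
/- Let S be a numerical semigroup with largest gap f, smallest positive element m, and every element of S in (0, f) a generator (i.e., S is primitive). If k ∈ S satisfies k + 1 ∉ S and f < 2m − 1, then slide_k(S) is a primitive numerical semigroup of genus g − 1 with ew(slide_k(S)) = ew(S) − 1. -/
theorem stmt16 (S : Set ℕ) (hS : IsNumericalSemigroup S)
    (f m : ℕ) (hf : f ∉ S) (hfmax : ∀ b ∉ S, b ≤ f)
    (hm : m ∈ S) (hm0 : 0 < m) (hmmin : ∀ a ∈ S, 0 < a → m ≤ a)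
    (hprim : ∀ a ∈ S, 0 < a → a < f → IsGenerator S a)
    (k : ℕ) (hk : k ∈ S) (hk0 : 0 < k) (hk1 : k + 1 ∉ S)
    (hf2 : f < 2 * m - 1) :
    IsNumericalSemigroup (slide k '' S) ∧
    IsPrimitive (slide k '' S) ∧
    genus (slide k '' S) = genus S - 1 ∧
    ew (slide k '' S) = ew S - 1 := by
  obtain ⟨h0S, hfin, hadd⟩ := hS
  have h1S : (1:ℕ) ∉ S := by
    intro h1
    have hall : ∀ n : ℕ, n ∈ S := by
      intro n; induction n with
      | zero => exact h0S
      | succ n ih => exact hadd n ih 1 h1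
    exact hf (hall f)
  have hm1 : m ≠ 1 := fun h => h1S (h ▸ hm)
  have hkm : m ≤ k := hmmin k hk hk0
  have hk1f : k + 1 ≤ f := hfmax _ hk1
  have hm3 : 3 ≤ m := by omega
  have hgt : ∀ n, f < n → n ∈ S := by
    intro n hn; by_contra h; have := hfmax n h; omega
  have hfpos : 0 < f := by omega
  have hkf : k < f := by omega
  have hndvd : ∀ s, 0 < s → s < 2*k → s ≠ k → ¬ k ∣ s := by
    rintro s h0 h2 hne ⟨c, rfl⟩
    rcases c with _ | _ | c
    · simp at h0
    · exact hne (mul_one k)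
    · have h3 : k * 2 ≤ k * (c + 2) := Nat.mul_le_mul (le_refl k) (by omega)
      linarith
  have hmod1 : ∀ s, 0 < s → s < 2*k → s % k = 1 → s = 1 ∨ s = k + 1 := by
    intro s h0 h2 hmo
    have hd := Nat.div_add_mod s k
    rw [hmo] at hd
    rcases Nat.lt_or_ge (s / k) 2 with hq | hq
    · rcases Nat.le_one_iff_eq_zero_or_eq_one.mp (Nat.lt_succ_iff.mp hq) with h | h <;> rw [h] at hd <;> simp at hd <;> omega
    · exfalso
      have h3 : k * 2 ≤ k * (s / k) := Nat.mul_le_mul (le_refl k) hq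
      linarith
  have hsl0 : slide k 0 = 0 := by simp [slide]
  have hslk : slide k k = k := by simp [slide]
  have hsl_small : ∀ s ∈ S, 0 < s → s ≤ f → s ≠ k → slide k s = s - 1 := by
    intro s hs h0 hsf hne
    have h2k : s < 2 * k := by omega
    have h1 : ¬ k ∣ s := hndvd s h0 h2k hne
    have h2 : s % k ≠ 1 := by
      intro h
      rcases hmod1 s h0 h2k h with rfl | rfl
      · exact h1S hs
      · exact hk1 hs
    simp [slide, h1, h2]
  have hsl_large : ∀ s, f < s → f ≤ slide k s := by
    intro s hfs
    simp only [slide]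
    split_ifs with h1 h2
    · omega
    · rcases Nat.lt_or_ge s (f+2) with h | h
      · exfalso
        have hs1 : s = f + 1 := by omega
        subst hs1
        have hd := Nat.div_add_mod (f+1) k
        rw [h2] at hd
        have hfq : k * ((f+1)/k) = f := Nat.add_right_cancel hd
        exact hndvd f hfpos (by omega) (by omega) ⟨_, hfq.symm⟩
      · omega
    · omega
  have himg : ∀ t : ℕ, t ∈ slide k '' S ↔
      (t = 0 ∨ t = k ∨ (t + 1 ∈ S ∧ t + 1 < f ∧ t + 1 ≠ k) ∨ f ≤ t) := by
    intro t
    constructor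
    · rintro ⟨s, hs, rfl⟩
      rcases Nat.eq_zero_or_pos s with rfl | h0
      · left; exact hsl0
      rcases Nat.lt_or_ge f s with h | h
      · right; right; right; exact hsl_large s h
      by_cases hsk : s = k
      · subst hsk; right; left; exact hslk
      · rw [hsl_small s hs h0 h hsk]
        right; right; left
        have hsm := hmmin s hs h0
        have hsf : s ≠ f := fun hh => hf (hh ▸ hs)
        refine ⟨?_, by omega, by omega⟩
        have : s - 1 + 1 = s := by omega
        rw [this]; exact hs
    · intro ht
      rcases ht with rfl | rfl | ⟨h1, h2, h3⟩ | hft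
      · exact ⟨0, h0S, hsl0⟩
      · exact ⟨_, hk, hslk⟩
      · refine ⟨t+1, h1, ?_⟩
        rw [hsl_small (t+1) h1 (by omega) (by omega) h3]
        omega
      · rcases eq_or_lt_of_le hft with rfl | hlt
        · refine ⟨f+1, hgt _ (by omega), ?_⟩
          have hd1 : ¬ k ∣ (f+1) := hndvd (f+1) (by omega) (by omega) (by omega)
          have hd2 : (f+1) % k ≠ 1 := by
            intro h
            rcases hmod1 (f+1) (by omega) (by omega) h with h' | h' <;> omega
          simp only [slide, if_neg hd1, if_neg hd2]
          omega
        · by_cases hd1 : k ∣ t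
          · exact ⟨t, hgt t hlt, by simp [slide, hd1]⟩
          by_cases hd2 : k ∣ (t+1)
          · refine ⟨t+2, hgt _ (by omega), ?_⟩
            have hd3 : ¬ k ∣ (t+2) := by
              intro hdd
              have h1 := Nat.dvd_sub hdd hd2
              rw [show t + 2 - (t + 1) = 1 by omega] at h1
              have := Nat.le_of_dvd (by omega) (by simpa using h1 : k ∣ 1)
              omega
            have hd4 : (t+2) % k = 1 := by
              obtain ⟨q, hq⟩ := hd2
              have h5 : t + 2 = k * q + 1 := by rw [← hq]
              rw [h5, Nat.mul_add_mod]
              exact Nat.mod_eq_of_lt (by omega)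
            simp only [slide, if_neg hd3, if_pos hd4]
            omega
          · refine ⟨t+1, hgt _ (by omega), ?_⟩
            have hd4 : (t+1) % k ≠ 1 := by
              intro h
              have hd := Nat.div_add_mod (t+1) k
              rw [h] at hd
              exact hd1 ⟨(t+1)/k, (Nat.add_right_cancel hd).symm⟩
            simp only [slide, if_neg hd2, if_neg hd4]
            omega
  have hS'pos : ∀ t, t ∈ slide k '' S → 0 < t → m - 1 ≤ t := by
    intro t ht h0
    rcases (himg t).mp ht with rfl | rfl | ⟨h1, _, _⟩ | h
    · omega
    · omega
    · have := hmmin _ h1 (by omega); omega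
    · omega
  have hmemk : k ∈ slide k '' S := ⟨k, hk, hslk⟩
  have hgap' : ∀ b, b ∉ slide k '' S → b < f := by
    intro b hb
    by_contra h
    exact hb ((himg b).mpr (Or.inr (Or.inr (Or.inr (by omega)))))
  refine ⟨⟨(himg 0).mpr (Or.inl rfl), ?_, ?_⟩, ?_, ?_, ?_⟩
  · -- cofinite
    exact (Set.finite_Iio f).subset (fun t ht => hgap' t ht)
  · -- closed under addition
    intro a ha b hb
    rcases Nat.eq_zero_or_pos a with rfl | ha0
    · simpa using hb
    rcases Nat.eq_zero_or_pos b with rfl | hb0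
    · simpa using ha
    have h1 := hS'pos a ha ha0
    have h2 := hS'pos b hb hb0
    exact (himg _).mpr (Or.inr (Or.inr (Or.inr (by omega))))
  · -- primitive
    intro b hb x hx hx0 y hy hy0
    have hbf := hgap' b hb
    have h1 := hS'pos x hx hx0
    have h2 := hS'pos y hy hy0
    omega
  · -- genus
    have hθinj : Set.InjOn (fun t => if t = k - 1 then k + 1 else t + 1)
        {n | n ∉ slide k '' S} := by
      intro t₁ h₁ t₂ h₂ heq
      simp only [Set.mem_setOf_eq] at h₁ h₂
      simp only at heq
      split_ifs at heq with e1 e2 e2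
      · omega
      · exfalso
        apply h₂
        have : t₂ = k := by omega
        rw [this]; exact hmemk
      · exfalso
        apply h₁
        have : t₁ = k := by omega
        rw [this]; exact hmemk
      · omega
    have hθimg : (fun t => if t = k - 1 then k + 1 else t + 1) '' {n | n ∉ slide k '' S}
        = {n | n ∉ S} \ {1} := by
      ext b
      simp only [Set.mem_image, Set.mem_setOf_eq, Set.mem_diff, Set.mem_singleton_iff]
      constructor
      · rintro ⟨t, ht, rfl⟩
        have ht' : ¬(t = 0 ∨ t = k ∨ (t + 1 ∈ S ∧ t + 1 < f ∧ t + 1 ≠ k) ∨ f ≤ t) :=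
          fun hh => ht ((himg t).mpr hh)
        push_neg at ht'
        obtain ⟨ht0, htk, ht3, htf⟩ := ht'
        split_ifs with he
        · exact ⟨hk1, by omega⟩
        · refine ⟨?_, by omega⟩
          intro hmem
          rcases Nat.lt_or_ge (t + 1) f with h' | h'
          · have hh := ht3 hmem h'
            exact he (by omega)
          · have hh : t + 1 = f := by omega
            exact hf (hh ▸ hmem)
      · rintro ⟨hbS, hb1⟩
        have hb0 : b ≠ 0 := fun h => hbS (h ▸ h0S)
        have hbf : b ≤ f := hfmax b hbS
        have hbk' : b ≠ k := fun h => hbS (h ▸ hk)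
        by_cases hbk : b = k + 1
        · refine ⟨k - 1, ?_, by rw [if_pos rfl]; omega⟩
          intro hmem
          rcases (himg (k-1)).mp hmem with h | h | ⟨h1, h2, h3⟩ | h
          · omega
          · omega
          · exact h3 (by omega)
          · omega
        · refine ⟨b - 1, ?_, ?_⟩
          · intro hmem
            rcases (himg (b-1)).mp hmem with h | h | ⟨h1, h2, h3⟩ | h
            · omega
            · omega
            · have hh : b - 1 + 1 = b := by omega
              rw [hh] at h1; exact hbS h1
            · omega
          · rw [if_neg (by omega)]
            omega
    show genus (slide k '' S) = genus S - 1
    unfold genus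
    calc {n | n ∉ slide k '' S}.ncard
        = ((fun t => if t = k - 1 then k + 1 else t + 1) '' {n | n ∉ slide k '' S}).ncard :=
          (Set.ncard_image_of_injOn hθinj).symm
      _ = ({n | n ∉ S} \ {1}).ncard := by rw [hθimg]
      _ = {n | n ∉ S}.ncard - 1 := Set.ncard_diff_singleton_of_mem (s := {n | n ∉ S}) h1S
  · -- ew
    have hPQ : {p : ℕ × ℕ | p.1 < p.2 ∧ IsGenerator S p.1 ∧ p.2 ∉ S}
        = {p : ℕ × ℕ | 0 < p.1 ∧ p.1 < p.2 ∧ p.1 ∈ S ∧ p.2 ∉ S} := by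
      ext ⟨a, b⟩
      simp only [Set.mem_setOf_eq]
      constructor
      · rintro ⟨hab, ⟨haS, ha0, _⟩, hbS⟩
        exact ⟨ha0, hab, haS, hbS⟩
      · rintro ⟨ha0, hab, haS, hbS⟩
        have hbf : b ≤ f := hfmax b hbS
        exact ⟨hab, hprim a haS ha0 (by omega), hbS⟩
    have hP'Q' : {p : ℕ × ℕ | p.1 < p.2 ∧ IsGenerator (slide k '' S) p.1 ∧ p.2 ∉ slide k '' S}
        = {p : ℕ × ℕ | 0 < p.1 ∧ p.1 < p.2 ∧ p.1 ∈ slide k '' S ∧ p.2 ∉ slide k '' S} := by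
      ext ⟨a, b⟩
      simp only [Set.mem_setOf_eq]
      constructor
      · rintro ⟨hab, ⟨haS, ha0, _⟩, hbS⟩
        exact ⟨ha0, hab, haS, hbS⟩
      · rintro ⟨ha0, hab, haS, hbS⟩
        refine ⟨hab, ⟨haS, ha0, ?_⟩, hbS⟩
        rintro ⟨x, hx, y, hy, hx0, hy0, hxy⟩
        have hbf := hgap' b hbS
        have h1 := hS'pos x hx hx0
        have h2 := hS'pos y hy hy0
        omega
    have hQfin : {p : ℕ × ℕ | 0 < p.1 ∧ p.1 < p.2 ∧ p.1 ∈ S ∧ p.2 ∉ S}.Finite := by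
      refine ((Set.finite_Iic f).prod (Set.finite_Iic f)).subset ?_
      rintro ⟨a, b⟩ ⟨h0, hab, haS, hbS⟩
      have hbf : b ≤ f := hfmax b hbS
      exact ⟨by simpa using (by omega : a ≤ f), by simpa using hbf⟩
    have hkk1Q : ((k, k+1) : ℕ × ℕ) ∈ {p : ℕ × ℕ | 0 < p.1 ∧ p.1 < p.2 ∧ p.1 ∈ S ∧ p.2 ∉ S} :=
      ⟨hk0, by omega, hk, hk1⟩
    have hgapb : ∀ b, b ∉ S → b ≠ 1 → b ≠ k + 1 → b - 1 ∉ slide k '' S := by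
      intro b hbS hb1 hbk hmem
      have hb0 : b ≠ 0 := fun h => hbS (h ▸ h0S)
      have hbf : b ≤ f := hfmax b hbS
      rcases (himg (b-1)).mp hmem with h | h | ⟨h1, h2, h3⟩ | h
      · omega
      · omega
      · have hh : b - 1 + 1 = b := by omega
        rw [hh] at h1; exact hbS h1
      · omega
    have hk1gap : k - 1 ∉ slide k '' S := by
      intro hmem
      rcases (himg (k-1)).mp hmem with h | h | ⟨h1, h2, h3⟩ | h
      · omega
      · omega
      · exact h3 (by omega)
      · omega
    have hΨimg : (fun p : ℕ × ℕ => (slide k p.1, if p.2 = k + 1 then k - 1 else p.2 - 1)) ''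
          ({p : ℕ × ℕ | 0 < p.1 ∧ p.1 < p.2 ∧ p.1 ∈ S ∧ p.2 ∉ S} \ {(k, k+1)})
        = {p : ℕ × ℕ | 0 < p.1 ∧ p.1 < p.2 ∧ p.1 ∈ slide k '' S ∧ p.2 ∉ slide k '' S} := by
      ext ⟨a', b'⟩
      simp only [Set.mem_image, Set.mem_setOf_eq, Set.mem_diff, Set.mem_singleton_iff,
        Prod.mk.injEq, Prod.exists]
      constructor
      · rintro ⟨a, b, ⟨⟨ha0, hab, haS, hbS⟩, hne⟩, heqa, heqb⟩
        have hbf : b ≤ f := hfmax b hbS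
        have ham : m ≤ a := hmmin a haS ha0
        by_cases hak : a = k
        · subst hak
          have hbk : b ≠ a + 1 := fun h => hne ⟨rfl, h⟩
          rw [hslk] at heqa
          rw [if_neg hbk] at heqb
          subst heqa; subst heqb
          exact ⟨by omega, by omega, hmemk, hgapb b hbS (by omega) hbk⟩
        · rw [hsl_small a haS ha0 (by omega) hak] at heqa
          have haS' : a - 1 ∈ slide k '' S := by
            refine (himg _).mpr (Or.inr (Or.inr (Or.inl ⟨?_, by omega, by omega⟩)))
            have hh : a - 1 + 1 = a := by omega
            rw [hh]; exact haS
          by_cases hbk : b = k + 1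
          · rw [if_pos hbk] at heqb
            subst heqa; subst heqb
            exact ⟨by omega, by omega, haS', hk1gap⟩
          · rw [if_neg hbk] at heqb
            subst heqa; subst heqb
            exact ⟨by omega, by omega, haS', hgapb b hbS (by omega) hbk⟩
      · rintro ⟨ha0', hab', haS', hbS'⟩
        have hbf' : b' < f := hgap' b' hbS'
        have hb'k : b' ≠ k := fun h => hbS' (h ▸ hmemk)
        have hb'cases : (b' + 1 ∉ S) ∨ b' + 1 = k := by
          by_contra h
          push_neg at h
          obtain ⟨hb1, hb2⟩ := h
          rcases Nat.lt_or_ge (b' + 1) f with h' | h'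
          · exact hbS' ((himg b').mpr (Or.inr (Or.inr (Or.inl ⟨hb1, h', hb2⟩))))
          · have hh : b' + 1 = f := by omega
            exact hf (hh ▸ hb1)
        rcases (himg a').mp haS' with rfl | rfl | ⟨h1, h2, h3⟩ | h
        · omega
        · -- a' = k
          rcases hb'cases with hb1 | hb1
          · refine ⟨a', b' + 1, ⟨⟨by omega, by omega, hk, hb1⟩, ?_⟩, ?_, ?_⟩
            · rintro ⟨-, hh⟩; omega
            · exact hslk
            · rw [if_neg (by omega)]; omega
          · omega
        · rcases hb'cases with hb1 | hb1
          · refine ⟨a' + 1, b' + 1, ⟨⟨by omega, by omega, h1, hb1⟩, ?_⟩, ?_, ?_⟩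
            · rintro ⟨hh, -⟩; exact h3 hh
            · rw [hsl_small (a'+1) h1 (by omega) (by omega) h3]; omega
            · rw [if_neg (by omega)]; omega
          · refine ⟨a' + 1, k + 1, ⟨⟨by omega, by omega, h1, hk1⟩, ?_⟩, ?_, ?_⟩
            · rintro ⟨hh, -⟩; exact h3 hh
            · rw [hsl_small (a'+1) h1 (by omega) (by omega) h3]; omega
            · rw [if_pos rfl]; omega
        · omega
    have hΨinj : Set.InjOn (fun p : ℕ × ℕ => (slide k p.1, if p.2 = k + 1 then k - 1 else p.2 - 1))
        ({p : ℕ × ℕ | 0 < p.1 ∧ p.1 < p.2 ∧ p.1 ∈ S ∧ p.2 ∉ S} \ {(k, k+1)}) := by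
      rintro ⟨a₁, b₁⟩ ⟨⟨h01, h12, hS1, hb1⟩, -⟩ ⟨a₂, b₂⟩ ⟨⟨h02, h22, hS2, hb2⟩, -⟩ heq
      simp only [Prod.mk.injEq] at heq
      obtain ⟨e1, e2⟩ := heq
      have hbf1 : b₁ ≤ f := hfmax _ hb1
      have hbf2 : b₂ ≤ f := hfmax _ hb2
      have ha : a₁ = a₂ := by
        by_cases h1 : a₁ = k <;> by_cases h2 : a₂ = k
        · omega
        · rw [h1, hslk, hsl_small a₂ hS2 h02 (by omega) h2] at e1
          exfalso
          have hh : a₂ = k + 1 := by omega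
          exact hk1 (hh ▸ hS2)
        · rw [h2, hslk, hsl_small a₁ hS1 h01 (by omega) h1] at e1
          exfalso
          have hh : a₁ = k + 1 := by omega
          exact hk1 (hh ▸ hS1)
        · rw [hsl_small a₁ hS1 h01 (by omega) h1, hsl_small a₂ hS2 h02 (by omega) h2] at e1
          omega
      have hb : b₁ = b₂ := by
        by_cases h1 : b₁ = k + 1 <;> by_cases h2 : b₂ = k + 1
        · omega
        · rw [if_pos h1, if_neg h2] at e2
          exfalso
          have hh : b₂ = k := by omega
          exact hb2 (hh ▸ hk)
        · rw [if_pos h2, if_neg h1] at e2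
          exfalso
          have hh : b₁ = k := by omega
          exact hb1 (hh ▸ hk)
        · rw [if_neg h1, if_neg h2] at e2
          omega
      simp [ha, hb]
    show ew (slide k '' S) = ew S - 1
    unfold ew
    rw [hPQ, hP'Q', ← hΨimg, Set.ncard_image_of_injOn hΨinj,
      Set.ncard_diff_singleton_of_mem hkk1Q]
end
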